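/- arXiv:math/0602650 — 6 statements merged into one kernel-verified Lean document; each statement's English description precedes it below -/
import Mathlib

section
/- Let p be a prime with p ≡ 1 (mod 3), let n ≥ 1, and let q = p^n. Then the polynomial X⁴ − qX² + q² is irreducible over ℚ. -/
open Polynomial

private lemma monic_deg_two_repr {g : ℚ[X]} (hm : g.Monic) (hd : g.natDegree = 2) :
    g = X ^ 2 + C (g.coeff 1) * X + C (g.coeff 0) := by
  ext i
  have h2 : g.coeff 2 = 1 := by
    have := hm.coeff_natDegree; rwa [hd] at this
  match i with
  | 0 => simp
  | 1 => simp
  | 2 => simp [h2, coeff_X]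
  | (k+3) =>
    have h0 : g.coeff (k+3) = 0 := coeff_eq_zero_of_natDegree_lt (by omega)
    simp [h0, coeff_X]

theorem weil_poly_irreducible (p n : ℕ) (hp : p.Prime) (hp3 : p % 3 = 1) (hn : 1 ≤ n) :
    Irreducible (X ^ 4 - C ((p : ℚ) ^ n) * X ^ 2 + C (((p : ℚ) ^ n) ^ 2) : ℚ[X]) := by
  set q : ℚ := (p : ℚ) ^ n with hq
  have hq0 : 0 < q := by
    have : (0:ℚ) < p := by exact_mod_cast hp.pos
    rw [hq]; positivity
  set f : ℚ[X] := X ^ 4 - C q * X ^ 2 + C (q ^ 2) with hf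
  -- basic facts about f
  have hfm : f.Monic := by unfold f; monicity!
  have hfd : f.natDegree = 4 := by unfold f; compute_degree!
  have hfne : f ≠ 0 := hfm.ne_zero
  -- no rational square root of 3q
  have hnsq : ∀ a : ℚ, a ^ 2 ≠ 3 * q := by
    intro a ha
    have : IsSquare ((3 * p ^ n : ℕ) : ℚ) := ⟨a, by push_cast; rw [← sq, ha, hq]⟩
    rw [Rat.isSquare_natCast_iff] at this
    obtain ⟨k, hk⟩ := this
    have h3k : 3 ∣ k := by
      have : (3 : ℕ).Prime := Nat.prime_three
      have h3 : 3 ∣ k * k := ⟨p ^ n, hk.symm⟩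
      rcases (this.dvd_mul).mp h3 with h | h <;> exact h
    obtain ⟨m, rfl⟩ := h3k
    have hpn : p ^ n = 3 * (m * m) := by nlinarith [hk]
    have h3p : 3 ∣ p := Nat.Prime.dvd_of_dvd_pow Nat.prime_three ⟨m * m, hpn⟩
    have := (Nat.prime_dvd_prime_iff_eq Nat.prime_three hp).mp h3p
    omega
  -- f has no rational root
  have hroot : ∀ r : ℚ, f.eval r ≠ 0 := by
    intro r hr
    have : r ^ 4 - q * r ^ 2 + q ^ 2 = 0 := by
      simpa [hf] using hr
    nlinarith [sq_nonneg (r ^ 2 - q / 2), sq_nonneg r]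
  -- no monic factor of degree 1 or 2
  have hfac : ∀ g : ℚ[X], g.Monic → g ∣ f → g.natDegree = 1 ∨ g.natDegree = 2 → False := by
    rintro g hgm hgd (h1 | h2)
    · -- degree one: gives a root
      obtain ⟨k, hk⟩ := hgd
      apply hroot (-(g.coeff 0))
      rw [hk, eval_mul]
      have h0 : eval (-(g.coeff 0)) g = 0 := by
        rw [hgm.eq_X_add_C h1]; simp
      rw [h0, zero_mul]
    · -- degree two
      obtain ⟨h, hk⟩ := hgd
      have hhm : h.Monic := hgm.of_mul_monic_left (hk ▸ hfm)
      have hhd : h.natDegree = 2 := by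
        have := natDegree_mul hgm.ne_zero hhm.ne_zero
        rw [← hk, hfd, h2] at this
        omega
      set a := g.coeff 1; set b := g.coeff 0
      set c := h.coeff 1; set d := h.coeff 0
      have hgr := monic_deg_two_repr hgm h2
      have hhr := monic_deg_two_repr hhm hhd
      rw [hgr, hhr] at hk
      have hexp : f = X ^ 4 + C (a + c) * X ^ 3 + C (b + d + a * c) * X ^ 2
          + C (a * d + b * c) * X + C (b * d) := by
        rw [hk]; simp only [map_add, map_mul]; ring
      have hexp2 : f = X ^ 4 + C (0 : ℚ) * X ^ 3 + C (-q) * X ^ 2 + C (0 : ℚ) * X + C (q ^ 2) := by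
        rw [hf]; simp only [map_zero, map_neg, map_pow]; ring
      have hco := hexp2.symm.trans hexp
      have e3 : a + c = 0 := by
        have := congrArg (fun P => P.coeff 3) hco
        simp only [coeff_add, coeff_C_mul, coeff_X_pow, coeff_X, coeff_C] at this
        norm_num at this
        linarith [this]
      have e2 : b + d + a * c = -q := by
        have := congrArg (fun P => P.coeff 2) hco
        simp only [coeff_add, coeff_C_mul, coeff_X_pow, coeff_X, coeff_C] at this
        norm_num at this
        linarith [this]
      have e1 : a * d + b * c = 0 := by
        have := congrArg (fun P => P.coeff 1) hco
        simp only [coeff_add, coeff_C_mul, coeff_X_pow, coeff_X, coeff_C] at this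
        norm_num at this
        linarith [this]
      have e0 : b * d = q ^ 2 := by
        have := congrArg (fun P => P.coeff 0) hco
        simp only [coeff_add, coeff_C_mul, coeff_X_pow, coeff_X, coeff_C] at this
        norm_num at this
        linarith [this]
      have hc : c = -a := by linarith
      rcases mul_eq_zero.mp (show a * (d - b) = 0 by linear_combination e1 - b * hc) with h | h
      · have hbd : b + d = -q := by linear_combination e2 - c * h
        nlinarith [sq_nonneg (b - d), e0, hbd, hq0]
      · have hdb : d = b := by linarith
        have hb2 : b ^ 2 = q ^ 2 := by linear_combination e0 - b * hdb + b * h - b * h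
        rcases mul_eq_zero.mp (show (b - q) * (b + q) = 0 by linear_combination hb2) with hb | hb
        · refine hnsq a ?_
          have hac : a * c = -a ^ 2 := by linear_combination a * hc
          nlinarith [e2, hac, hdb, hb]
        · have hac : a * c = -a ^ 2 := by linear_combination a * hc
          nlinarith [sq_nonneg a, e2, hac, hdb, hb, hq0]
  -- main argument
  rw [irreducible_iff]
  constructor
  · intro hu
    have := natDegree_eq_zero_of_isUnit hu
    omega
  · intro u v huv
    by_contra hcon
    push_neg at hcon
    obtain ⟨hu, hv⟩ := hcon
    have hune : u ≠ 0 := by rintro rfl; simp at huv; exact hfne huv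
    have hvne : v ≠ 0 := by rintro rfl; simp at huv; exact hfne huv
    have hdsum : u.natDegree + v.natDegree = 4 := by
      have := natDegree_mul hune hvne
      rw [← huv, hfd] at this; omega
    have hdeg1 : ∀ w : ℚ[X], w ≠ 0 → ¬IsUnit w → 1 ≤ w.natDegree := by
      intro w hwne hwu
      rcases Nat.eq_zero_or_pos w.natDegree with h | h
      · exact absurd (isUnit_iff_degree_eq_zero.2 (by
          rw [degree_eq_natDegree hwne, h]; rfl)) hwu
      · exact h
    have hu1 := hdeg1 u hune hu
    have hv1 := hdeg1 v hvne hv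
    obtain ⟨w, hwne, hwdvd, hwd⟩ :
        ∃ w : ℚ[X], w ≠ 0 ∧ w ∣ f ∧ (w.natDegree = 1 ∨ w.natDegree = 2) := by
      rcases le_or_gt u.natDegree 2 with h | h
      · exact ⟨u, hune, ⟨v, huv⟩, by omega⟩
      · exact ⟨v, hvne, ⟨u, by rw [huv]; ring⟩, by omega⟩
    have hw'm : (w * C w.leadingCoeff⁻¹).Monic := monic_mul_leadingCoeff_inv hwne
    have hw'dvd : (w * C w.leadingCoeff⁻¹) ∣ f :=
      dvd_trans ⟨C w.leadingCoeff, by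
        rw [mul_assoc, ← C_mul, inv_mul_cancel₀ (leadingCoeff_ne_zero.2 hwne), C_1, mul_one]⟩ hwdvd
    have hw'd : (w * C w.leadingCoeff⁻¹).natDegree = w.natDegree :=
      natDegree_eq_of_degree_eq (degree_mul_leadingCoeff_inv w hwne)
    exact hfac _ hw'm hw'dvd (by omega)
end

section
/- Let p be a prime with p ≡ 1 (mod 3), let n ≥ 1, let q = p^n, let K = ℚ[X]/(X⁴ − qX² + q²), and let π denote the image of X in K. Then K is a totally complex number field of degree 4 over ℚ, the subfield K⁺ := ℚ(π + q/π) of K is a totally real number field of degree 2 over ℚ, and [K : K⁺] = 2. (Thus K is a CM-field with maximal real subfield K⁺ ≅ ℚ(√(3q)).) -/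
open Polynomial


lemma aux_not_sq_nat (p n : ℕ) (hp : p.Prime) (hp3 : p % 3 = 1) :
    ∀ k : ℕ, k ^ 2 ≠ 3 * p ^ n := by
  intro k hk
  have hp3' : p ≠ 3 := by omega
  have hpn : p ^ n ≠ 0 := pow_ne_zero n hp.pos.ne'
  have hk0 : k ≠ 0 := by
    intro h; rw [h] at hk; simp at hk; omega
  have h1 : (k ^ 2).factorization 3 = 2 * k.factorization 3 := by
    rw [Nat.factorization_pow]; simp [mul_comm]
  have h2 : (3 * p ^ n).factorization 3 = 1 := by
    rw [Nat.factorization_mul (by norm_num) hpn]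
    rw [Nat.factorization_pow]
    have : p.factorization 3 = 0 := by
      rw [hp.factorization, Finsupp.single_apply]
      simp [hp3']
    simp [this, Nat.Prime.factorization_self (by norm_num : Nat.Prime 3)]
  rw [hk] at h1
  omega

lemma aux_not_sq (p n : ℕ) (hp : p.Prime) (hp3 : p % 3 = 1) :
    ∀ b : ℚ, b ^ 2 ≠ 3 * (p : ℚ) ^ n := by
  intro b hb
  have hb' : b ^ 2 = ((3 * p ^ n : ℕ) : ℚ) := by push_cast; exact hb
  have hnum : b.num ^ 2 = (3 * p ^ n : ℕ) := by
    have := congrArg Rat.num hb'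
    rwa [Rat.num_pow, Rat.num_natCast] at this
  refine aux_not_sq_nat p n hp hp3 b.num.natAbs ?_
  have := congrArg Int.natAbs hnum
  rwa [Int.natAbs_pow, Int.natAbs_natCast] at this

set_option maxHeartbeats 1000000

theorem K_is_CM_field (p n : ℕ) (hp : p.Prime) (hp3 : p % 3 = 1)
    (hn : 1 ≤ n) (f : ℚ[X])
    (hf : f = X ^ 4 - C ((p : ℚ) ^ n) * X ^ 2 + C (((p : ℚ) ^ n) ^ 2))
    [Fact (Irreducible f)] :
    NumberField (AdjoinRoot f) ∧
    Module.finrank ℚ (AdjoinRoot f) = 4 ∧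
    (∀ φ : AdjoinRoot f →+* ℂ, ∃ x : AdjoinRoot f, (φ x).im ≠ 0) ∧
    (letI Kplus := IntermediateField.adjoin ℚ
        {AdjoinRoot.root f + ((p : AdjoinRoot f) ^ n) * (AdjoinRoot.root f)⁻¹}
     NumberField Kplus ∧
     (∀ ψ : Kplus →+* ℂ, ∀ x : Kplus, (ψ x).im = 0) ∧
     Module.finrank ℚ Kplus = 2 ∧
     Module.finrank Kplus (AdjoinRoot f) = 2) := by
  set q : ℚ := (p : ℚ) ^ n with hq
  have hq0 : q ≠ 0 := pow_ne_zero n (by exact_mod_cast hp.pos.ne')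
  have hdeg : f.natDegree = 4 := by rw [hf]; compute_degree!
  have hf0 : f ≠ 0 := fun h => by simp [h] at hdeg
  set K := AdjoinRoot f with hK
  let pb : PowerBasis ℚ K := AdjoinRoot.powerBasis hf0
  haveI hfin : FiniteDimensional ℚ K := pb.finite
  have hrank : Module.finrank ℚ K = 4 := by
    rw [pb.finrank, AdjoinRoot.powerBasis_dim, hdeg]
  haveI hchar : CharZero K := charZero_of_injective_algebraMap (algebraMap ℚ K).injective
  have hNF : NumberField K := ⟨⟩
  set r : K := AdjoinRoot.root f with hr
  have haev : aeval r f = 0 := by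
    rw [aeval_def]; exact AdjoinRoot.eval₂_root f
  have haev2 : aeval r (X ^ 4 - C q * X ^ 2 + C (q ^ 2)) = 0 := by
    rw [← hf]; exact haev
  simp only [map_add, map_sub, map_mul, map_pow, aeval_X, aeval_C] at haev2
  have halg : algebraMap ℚ K q = (q : K) := by norm_cast
  have hroot : r ^ 4 = (q : K) * r ^ 2 - (q : K) ^ 2 := by
    rw [halg] at haev2
    linear_combination haev2
  have hr0 : r ≠ 0 := by
    intro h
    rw [h] at hroot
    simp at hroot
    exact hq0 (by exact_mod_cast hroot)
  set α : K := r + (p : K) ^ n * r⁻¹ with hα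
  have hpK : ((p : K)) ^ n = (q : K) := by rw [hq]; push_cast; ring
  have hαr : α * r = r ^ 2 + (q : K) := by
    rw [hα, add_mul, mul_assoc, inv_mul_cancel₀ hr0, hpK]; ring
  have hα2 : α ^ 2 = ((3 * q : ℚ) : K) := by
    have h2 : α ^ 2 * r ^ 2 = ((3 * q : ℚ) : K) * r ^ 2 := by
      have e : α ^ 2 * r ^ 2 = (α * r) ^ 2 := by ring
      rw [e, hαr]
      push_cast
      linear_combination hroot
    exact mul_right_cancel₀ (pow_ne_zero 2 hr0) h2
  -- minimal polynomial of α
  have hmonic : (X ^ 2 - C (3 * q) : ℚ[X]).Monic := monic_X_pow_sub_C _ (by norm_num)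
  have hirr : Irreducible (X ^ 2 - C (3 * q) : ℚ[X]) := by
    refine X_pow_sub_C_irreducible_of_prime Nat.prime_two ?_
    intro b
    rw [hq]
    exact aux_not_sq p n hp hp3 b
  have haevg : aeval α (X ^ 2 - C (3 * q) : ℚ[X]) = 0 := by
    simp only [map_sub, map_pow, aeval_X, aeval_C, hα2]
    rw [show algebraMap ℚ K (3 * q) = ((3 * q : ℚ) : K) by norm_cast]
    ring
  have hint : IsIntegral ℚ α := ⟨_, hmonic, by rw [← aeval_def]; exact haevg⟩
  have hmin : minpoly ℚ α = X ^ 2 - C (3 * q) :=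
    (minpoly.eq_of_irreducible_of_monic hirr haevg hmonic).symm
  set Kp : IntermediateField ℚ K := IntermediateField.adjoin ℚ {α} with hKp
  have hrank2 : Module.finrank ℚ Kp = 2 := by
    have h := IntermediateField.adjoin.finrank hint
    rw [hmin, natDegree_X_pow_sub_C] at h
    exact h
  haveI hfinKp : FiniteDimensional ℚ Kp := IntermediateField.adjoin.finiteDimensional hint
  have hNFp : NumberField Kp := ⟨⟩
  -- totally complex
  have hTC : ∀ φ : K →+* ℂ, ∃ x : K, (φ x).im ≠ 0 := by
    intro φ
    refine ⟨r, fun him => ?_⟩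
    set z := φ r with hz
    have hzeq : z ^ 4 = (q : ℂ) * z ^ 2 - (q : ℂ) ^ 2 := by
      have := congrArg φ hroot
      simpa [map_pow, map_sub, map_mul, map_ratCast] using this
    set a : ℝ := z.re with ha
    have hzre : z = ((a : ℝ) : ℂ) := by
      apply Complex.ext <;> simp [ha, him]
    have hre : a ^ 4 = ((q : ℝ)) * a ^ 2 - ((q : ℝ)) ^ 2 := by
      rw [hzre] at hzeq
      have h3 : ((a ^ 4 : ℝ) : ℂ) = (((q : ℝ) * a ^ 2 - (q : ℝ) ^ 2 : ℝ) : ℂ) := by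
        push_cast
        exact hzeq
      exact_mod_cast h3
    have hp0 : (0 : ℝ) < (p : ℝ) := by exact_mod_cast hp.pos
    have hqR : (0 : ℝ) < (q : ℝ) := by rw [hq]; push_cast; positivity
    nlinarith [sq_nonneg (a ^ 2 - (q : ℝ) / 2), sq_nonneg (q : ℝ)]
  -- totally real
  have hTR : ∀ ψ : Kp →+* ℂ, ∀ x : Kp, (ψ x).im = 0 := by
    intro ψ
    let pb2 : PowerBasis ℚ Kp := IntermediateField.adjoin.powerBasis hint
    have hgen : (algebraMap Kp K) pb2.gen = α :=
      IntermediateField.AdjoinSimple.algebraMap_gen ℚ α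
    have hgensq : pb2.gen ^ 2 = algebraMap ℚ Kp (3 * q) := by
      apply (algebraMap Kp K).injective
      rw [map_pow, hgen, hα2, ← IsScalarTower.algebraMap_apply, eq_ratCast (algebraMap ℚ K)]
    have hz : (ψ pb2.gen) ^ 2 = ((3 * q : ℚ) : ℂ) := by
      rw [← map_pow, hgensq, eq_ratCast (algebraMap ℚ Kp), map_ratCast]
    have him : (ψ pb2.gen).im = 0 := by
      set z := ψ pb2.gen with hzdef
      have h1 : (z ^ 2).im = 0 := by rw [hz]; simp
      have h2 : (z ^ 2).re = ((3 * q : ℚ) : ℝ) := by rw [hz]; simp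
      have hpos : (0 : ℝ) < ((3 * q : ℚ) : ℝ) := by
        rw [hq]; push_cast
        have hp0 : (0 : ℝ) < (p : ℝ) := by exact_mod_cast hp.pos
        positivity
      rw [pow_two] at h1 h2
      simp only [Complex.mul_im, Complex.mul_re] at h1 h2
      by_contra him0
      have hre0 : z.re = 0 := by
        rcases mul_eq_zero.mp (by linarith : z.re * z.im = 0) with h | h
        · exact h
        · exact absurd h him0
      rw [hre0] at h2
      nlinarith [sq_nonneg z.im]
    have hhom : ((starRingEnd ℂ).comp ψ).toRatAlgHom = ψ.toRatAlgHom := by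
      apply pb2.algHom_ext
      show (starRingEnd ℂ) (ψ pb2.gen) = ψ pb2.gen
      rw [Complex.conj_eq_iff_im]
      exact him
    intro x
    have hx : (starRingEnd ℂ) (ψ x) = ψ x := by
      have := congrArg (fun F => F x) hhom
      simpa using this
    exact Complex.conj_eq_iff_im.mp hx
  -- tower
  have htower : Module.finrank ℚ Kp * Module.finrank Kp K = 4 := by
    rw [← hrank]
    exact Module.finrank_mul_finrank ℚ Kp K
  have hKpK : Module.finrank Kp K = 2 := by
    rw [hrank2] at htower
    omega
  exact ⟨hNF, hrank, hTC, hNFp, hTR, hrank2, hKpK⟩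
end

section
/- Let p be a prime with p ≡ 1 (mod 3) (and, if n is even, assume in addition p ≡ 3 (mod 4)), let n ≥ 1, let q = p^n, let K = ℚ[X]/(X⁴ − qX² + q²), let π be the image of X in K, and let K⁺ = ℚ(π + q/π). Then K is unramified over K⁺ at every finite prime: every nonzero prime ideal of the ring of integers of K⁺ has ramification index 1 in the ring of integers of K. -/
open Polynomial NumberField nonZeroDivisors

set_option maxHeartbeats 4000000
set_option synthInstance.maxHeartbeats 400000

attribute [local instance] FractionRing.liftAlgebra FractionRing.isScalarTower_liftAlgebra

/-- Generic lemma: if two integral generators of `K/F` have minimal-polynomial-derivative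
values whose squares are coprime integers, then every finite prime is unramified. -/
theorem gen_ram (K : Type*) [Field K] [NumberField K] (F : IntermediateField ℚ K)
    (x y : 𝓞 K)
    (hxgen : Algebra.adjoin F {(algebraMap (𝓞 K) K x)} = ⊤)
    (hygen : Algebra.adjoin F {(algebraMap (𝓞 K) K y)} = ⊤)
    (a b : ℤ) (hab : IsCoprime a b)
    (hxa : (aeval x (derivative (minpoly (𝓞 F) x)))^2 = algebraMap ℤ (𝓞 K) a)
    (hyb : (aeval y (derivative (minpoly (𝓞 F) y)))^2 = algebraMap ℤ (𝓞 K) b) :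
    ∀ P : Ideal (𝓞 F), P.IsPrime → P ≠ ⊥ →
      ∀ Q : Ideal (𝓞 K), Q.IsPrime →
        Q.comap (algebraMap (𝓞 F) (𝓞 K)) = P →
          Ideal.ramificationIdx' P Q = 1 := by
  haveI : Module.Finite (𝓞 F) (𝓞 K) := Module.Finite.of_restrictScalars_finite ℤ _ _
  have hinj : Function.Injective (algebraMap (𝓞 F) (𝓞 K)) := by
    intro u v h
    have h2 : algebraMap (𝓞 F) K u = algebraMap (𝓞 F) K v := by
      rw [IsScalarTower.algebraMap_apply (𝓞 F) (𝓞 K) K, h, ← IsScalarTower.algebraMap_apply]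
    rw [IsScalarTower.algebraMap_apply (𝓞 F) F K, IsScalarTower.algebraMap_apply (𝓞 F) F K] at h2
    exact NumberField.RingOfIntegers.coe_injective ((algebraMap F K).injective h2)
  haveI : Module.IsTorsionFree (𝓞 F) (𝓞 K) := Module.isTorsionFree_iff_algebraMap_injective.mpr hinj
  intro P hP hPbot Q hQ hQP
  have hle : Ideal.map (algebraMap (𝓞 F) (𝓞 K)) P ≤ Q := hQP ▸ Ideal.map_comap_le
  have hmapbot : Ideal.map (algebraMap (𝓞 F) (𝓞 K)) P ≠ ⊥ := by
    intro hb; exact hPbot ((Ideal.map_eq_bot_iff_of_injective hinj).mp hb)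
  haveI : IsLocalization (Algebra.algebraMapSubmonoid (𝓞 K) (𝓞 F)⁰) (FractionRing (𝓞 K)) :=
    IsIntegralClosure.isLocalization _ (FractionRing (𝓞 F)) _ _
  haveI : FiniteDimensional (FractionRing (𝓞 F)) (FractionRing (𝓞 K)) :=
    Module.Finite.of_isLocalization (𝓞 F) (𝓞 K) (𝓞 F)⁰
  haveI : CharZero (FractionRing (𝓞 F)) :=
    charZero_of_injective_algebraMap (IsFractionRing.injective (𝓞 F) (FractionRing (𝓞 F)))
  haveI : Algebra.IsSeparable (FractionRing (𝓞 F)) (FractionRing (𝓞 K)) :=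
    Algebra.IsSeparable.of_integral _ _
  set e := Ideal.ramificationIdx' P Q with he
  have hene : e ≠ 0 := Ideal.IsDedekindDomain.ramificationIdx_ne_zero hmapbot hQ hle
  rcases Nat.lt_or_ge e 2 with h2 | h2
  · omega
  · exfalso
    haveI : P.IsMaximal := Ideal.IsPrime.isMaximal hP hPbot
    have hdvd : Q ^ e ∣ Ideal.map (algebraMap (𝓞 F) (𝓞 K)) P := by
      rw [Ideal.dvd_iff_le]; exact Ideal.le_pow_ramificationIdx
    have hQd : Q ^ (e - 1) ∣ differentIdeal (𝓞 F) (𝓞 K) :=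
      pow_sub_one_dvd_differentIdeal (𝓞 F) Q e hPbot hdvd
    have hQdd : differentIdeal (𝓞 F) (𝓞 K) ≤ Q := by
      refine le_trans ?_ (Ideal.pow_le_self (n := e - 1) (by omega))
      exact Ideal.le_of_dvd hQd
    have hxQ : aeval x (derivative (minpoly (𝓞 F) x)) ∈ Q :=
      hQdd (aeval_derivative_mem_differentIdeal (𝓞 F) F K x hxgen)
    have hyQ : aeval y (derivative (minpoly (𝓞 F) y)) ∈ Q :=
      hQdd (aeval_derivative_mem_differentIdeal (𝓞 F) F K y hygen)
    have haQ : algebraMap ℤ (𝓞 K) a ∈ Q := hxa ▸ Ideal.pow_mem_of_mem Q hxQ 2 (by norm_num)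
    have hbQ : algebraMap ℤ (𝓞 K) b ∈ Q := hyb ▸ Ideal.pow_mem_of_mem Q hyQ 2 (by norm_num)
    obtain ⟨u, v, huv⟩ := hab
    have h1 : (1 : 𝓞 K) ∈ Q := by
      have := Q.add_mem (Q.mul_mem_left (algebraMap ℤ (𝓞 K) u) haQ)
        (Q.mul_mem_left (algebraMap ℤ (𝓞 K) v) hbQ)
      rwa [← map_mul, ← map_mul, ← map_add, huv, map_one] at this
    exact hQ.ne_top (Q.eq_top_of_isUnit_mem h1 isUnit_one)

/-- A monic divisor of a monic polynomial of the same degree equals it. -/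
theorem monic_dvd_monic_eq {R : Type*} [CommRing R] [IsDomain R] {G m : R[X]}
    (hG : G.Monic) (hm : m.Monic) (hdvd : m ∣ G) (hdeg : m.natDegree = G.natDegree) :
    m = G := by
  obtain ⟨c, hc⟩ := hdvd
  have hc0 : c ≠ 0 := by
    rintro rfl
    rw [mul_zero] at hc
    exact hG.ne_zero hc
  have hdc : c.natDegree = 0 := by
    have := natDegree_mul hm.ne_zero hc0
    rw [← hc, hdeg] at this
    omega
  have hcC : c = C (c.coeff 0) := eq_C_of_natDegree_eq_zero hdc
  have hlc : c.coeff 0 = 1 := by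
    have h := congrArg leadingCoeff hc
    rw [hG.leadingCoeff, leadingCoeff_mul, hm.leadingCoeff, one_mul] at h
    rw [leadingCoeff, hdc] at h
    exact h.symm
  rw [hc, hcC, hlc, map_one, mul_one]

theorem minpoly_eq_of_gen {K : Type*} [Field K] [NumberField K] (F : IntermediateField ℚ K)
    (hrank : Module.finrank F K = 2) (x : 𝓞 K) (G : (𝓞 F)[X])
    (hG : G.Monic) (hdeg : G.natDegree = 2) (hroot : aeval x G = 0)
    (hgen : Algebra.adjoin F {(algebraMap (𝓞 K) K x)} = ⊤) :
    minpoly (𝓞 F) x = G := by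
  have hint : IsIntegral (𝓞 F) x := (RingOfIntegers.isIntegral x).tower_top
  have hdvd : minpoly (𝓞 F) x ∣ G := minpoly.isIntegrallyClosed_dvd hint hroot
  have hfield : minpoly F (algebraMap (𝓞 K) K x) = (minpoly (𝓞 F) x).map (algebraMap (𝓞 F) F) :=
    minpoly.isIntegrallyClosed_eq_field_fractions F K hint
  have hIF : IntermediateField.adjoin F {(algebraMap (𝓞 K) K x)} = ⊤ := by
    apply IntermediateField.toSubalgebra_injective
    rw [IntermediateField.top_toSubalgebra]
    exact top_le_iff.mp (hgen ▸ IntermediateField.algebra_adjoin_le_adjoin F _)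
  have h2 : (minpoly F (algebraMap (𝓞 K) K x)).natDegree = 2 := by
    rw [← IntermediateField.adjoin.finrank (IsIntegral.of_finite F _), hIF,
      IntermediateField.finrank_top', hrank]
  have hdegm : (minpoly (𝓞 F) x).natDegree = 2 := by
    rw [hfield, (minpoly.monic hint).natDegree_map] at h2
    exact h2
  exact monic_dvd_monic_eq hG (minpoly.monic hint) hdvd (by rw [hdegm, hdeg])

theorem no_rat_sqrt (p n : ℕ) (hp : p.Prime) (hp3 : p ≠ 3) {r : ℚ}
    (h : r ^ 2 = 3 * (p : ℚ) ^ n) : False := by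
  haveI : Fact (Nat.Prime 3) := ⟨by norm_num⟩
  have hp0 : (p : ℚ) ≠ 0 := Nat.cast_ne_zero.mpr hp.pos.ne'
  have hpn0 : (p : ℚ) ^ n ≠ 0 := pow_ne_zero _ hp0
  have hr0 : r ≠ 0 := by
    intro h0
    rw [h0] at h
    simp only [ne_eq, zero_pow, OfNat.ofNat_ne_zero, not_false_eq_true] at h
    exact hpn0 (by linarith [h.symm]) |>.elim
  have hv := congrArg (padicValRat 3) h
  rw [padicValRat.pow r, padicValRat.mul (by norm_num) hpn0, padicValRat.pow (p : ℚ)] at hv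
  have h3 : padicValRat 3 3 = 1 := by
    have := padicValRat.self (p := 3) (by norm_num)
    simpa using this
  have hpp : padicValRat 3 (p : ℚ) = 0 := by
    rw [padicValRat.of_nat]
    norm_cast
    exact padicValNat.eq_zero_of_not_dvd (fun hd => hp3 ((Nat.prime_dvd_prime_iff_eq (by norm_num) hp).mp hd).symm)
  rw [h3, hpp] at hv
  omega

theorem K_unramified_over_Kplus (p n : ℕ) (hp : p.Prime) (hp3 : p % 3 = 1)
    (hp4 : Even n → p % 4 = 3) (hn : 1 ≤ n) (f : ℚ[X])
    (hf : f = X ^ 4 - C ((p : ℚ) ^ n) * X ^ 2 + C (((p : ℚ) ^ n) ^ 2))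
    [Fact (Irreducible f)] :
    letI K := AdjoinRoot f
    letI Kplus := IntermediateField.adjoin ℚ
        {AdjoinRoot.root f + ((p : K) ^ n) * (AdjoinRoot.root f)⁻¹}
    ∀ P : Ideal (𝓞 Kplus), P.IsPrime → P ≠ ⊥ →
      ∀ Q : Ideal (𝓞 K), Q.IsPrime →
        Q.comap (algebraMap (𝓞 Kplus) (𝓞 K)) = P →
          Ideal.ramificationIdx' P Q = 1 := by
  set q : ℚ := (p : ℚ) ^ n with hq
  have hppos : (0:ℚ) < (p:ℚ) := by exact_mod_cast hp.pos
  have hq0 : q ≠ 0 := by positivity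
  have hfmonic : f.Monic := by rw [hf]; monicity!
  have hfdeg : f.natDegree = 4 := by rw [hf]; compute_degree!
  set K := AdjoinRoot f with hK
  set π := AdjoinRoot.root f with hπdef
  -- the canonical images of q in K
  have hpn : ((p : K) ^ n : K) = (q : K) := by rw [hq]; push_cast; ring
  have hrel : π ^ 4 - (q : K) * π ^ 2 + (q : K) ^ 2 = 0 := by
    have h0 : aeval π (X ^ 4 - C q * X ^ 2 + C (q ^ 2) : ℚ[X]) = 0 := by
      rw [← hf]; exact (AdjoinRoot.aeval_eq (f := f) f).trans (AdjoinRoot.mk_self)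
    simpa [map_sub, map_add, map_pow, map_mul, eq_ratCast] using h0
  have hqK0 : (q : K) ≠ 0 := by
    simpa using (Rat.cast_injective (α := K)).ne hq0
  have hπ0 : π ≠ 0 := by
    intro h
    rw [h] at hrel
    simp at hrel
    exact hqK0 (by simpa using hrel)
  have hrankK : Module.finrank ℚ K = 4 := by
    rw [(AdjoinRoot.powerBasis hfmonic.ne_zero).finrank, AdjoinRoot.powerBasis_dim, hfdeg]
  -- the generator of Kplus
  set sK : K := π + ((p : K) ^ n) * π⁻¹ with hsdef
  set Kplus := IntermediateField.adjoin ℚ {sK} with hKplus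
  have hs2 : sK ^ 2 = 3 * (q : K) := by
    rw [hsdef, hpn]
    linear_combination π⁻¹ ^ 2 * hrel + ((q : K) * (π * π⁻¹ + 3) - π ^ 2 * (1 + π * π⁻¹)) * (mul_inv_cancel₀ hπ0)
  have hs0 : sK ≠ 0 := by
    intro h
    rw [h] at hs2
    have : (3 : K) * (q : K) ≠ 0 := by
      apply mul_ne_zero _ hqK0
      norm_num
    exact this (by simpa using hs2.symm)
  -- the auxiliary elements
  set x2K : K := π - ((p : K) ^ n) * π⁻¹ with hx2def
  set wK : K := (π ^ 2 - (q : K)) * ((q : K))⁻¹ with hwdef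
  have hx2sq : x2K ^ 2 = - (q : K) := by
    rw [hx2def, hpn]
    linear_combination π⁻¹ ^ 2 * hrel + ((q : K) * (π * π⁻¹ - 1) - π ^ 2 * (1 + π * π⁻¹)) * (mul_inv_cancel₀ hπ0)
  have hw : wK ^ 2 + wK + 1 = 0 := by
    rw [hwdef]
    linear_combination ((q : K))⁻¹ ^ 2 * hrel + (-π ^ 2 * ((q : K))⁻¹ - 1) * (mul_inv_cancel₀ hqK0)
  have hsx2 : sK + x2K = 2 * π := by rw [hsdef, hx2def]; ring
  have hx2w : x2K * sK = (q : K) * (2 * wK + 1) := by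
    rw [hx2def, hsdef, hwdef, hpn]
    linear_combination (-π⁻¹ ^ 2) * hrel + (π ^ 2 - (q : K)) * (π * π⁻¹ + 1) * (mul_inv_cancel₀ hπ0) - 2 * (π ^ 2 - (q : K)) * (mul_inv_cancel₀ hqK0)
  -- finrank computations
  have hpne3 : p ≠ 3 := by omega
  have hsint : IsIntegral ℚ sK := IsIntegral.of_finite ℚ _
  have hgmonic : (X ^ 2 - C (3 * q) : ℚ[X]).Monic := by monicity!
  have hgdeg : (X ^ 2 - C (3 * q) : ℚ[X]).natDegree = 2 := by compute_degree!
  have hgroot : aeval sK (X ^ 2 - C (3 * q) : ℚ[X]) = 0 := by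
    simp only [map_sub, map_pow, aeval_X, aeval_C, eq_ratCast]
    rw [hs2]
    push_cast
    ring
  have hgirr : Irreducible (X ^ 2 - C (3 * q) : ℚ[X]) := by
    rw [hgmonic.irreducible_iff_roots_eq_zero_of_degree_le_three (by omega) (by omega)]
    by_contra hne
    obtain ⟨r, hr⟩ := Multiset.exists_mem_of_ne_zero hne
    rw [mem_roots hgmonic.ne_zero] at hr
    have hr2 : r ^ 2 = 3 * q := by
      have := hr
      simp only [IsRoot, eval_sub, eval_pow, eval_X, eval_C] at this
      linarith
    exact no_rat_sqrt p n hp hpne3 (by rw [← hq]; exact hr2)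
  have hmins : minpoly ℚ sK = X ^ 2 - C (3 * q) :=
    (minpoly.eq_of_irreducible_of_monic hgirr hgroot hgmonic).symm
  have hrankKplus : Module.finrank ℚ Kplus = 2 := by
    rw [hKplus]; exact (IntermediateField.adjoin.finrank hsint).trans (by rw [hmins, hgdeg])
  have hrank2 : Module.finrank Kplus K = 2 := by
    have := Module.finrank_mul_finrank ℚ Kplus K
    rw [hrankKplus, hrankK] at this
    omega
  -- generation facts
  have hsmem : sK ∈ Kplus := by rw [hKplus]; exact IntermediateField.mem_adjoin_simple_self ℚ sK
  have hscalar : ∀ (c : ℚ) (A : Subalgebra Kplus K), algebraMap ℚ K c ∈ A := by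
    intro c A
    rw [IsScalarTower.algebraMap_apply ℚ Kplus K]
    exact A.algebraMap_mem _
  have hgen_aux : ∀ z : K, π ∈ Algebra.adjoin Kplus {z} → Algebra.adjoin Kplus {z} = ⊤ := by
    intro z hz
    rw [eq_top_iff]
    intro w _
    have hw' : w ∈ Algebra.adjoin ℚ {π} := by
      rw [show Algebra.adjoin ℚ {π} = ⊤ from AdjoinRoot.adjoinRoot_eq_top]; trivial
    have hle : Algebra.adjoin ℚ {π} ≤ (Algebra.adjoin Kplus {z}).restrictScalars ℚ :=
      Algebra.adjoin_le (by simpa using hz)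
    exact hle hw'
  have h12 : algebraMap ℚ K (1/2) * (2 : K) = 1 := by
    rw [eq_ratCast]; push_cast; norm_num
  have hπx2 : π ∈ Algebra.adjoin Kplus {x2K} := by
    have h1 : x2K ∈ Algebra.adjoin Kplus {x2K} := Algebra.subset_adjoin rfl
    have h2 : sK ∈ Algebra.adjoin Kplus {x2K} :=
      (Algebra.adjoin Kplus {x2K}).algebraMap_mem (⟨sK, hsmem⟩ : Kplus)
    have hπeq : algebraMap ℚ K (1/2) * (sK + x2K) = π := by
      rw [hsx2, ← mul_assoc, h12, one_mul]
    rw [← hπeq]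
    exact Subalgebra.mul_mem _ (hscalar _ _) (Subalgebra.add_mem _ h2 h1)
  have hπw : π ∈ Algebra.adjoin Kplus {wK} := by
    have h1 : wK ∈ Algebra.adjoin Kplus {wK} := Algebra.subset_adjoin rfl
    have h2 : sK ∈ Algebra.adjoin Kplus {wK} :=
      (Algebra.adjoin Kplus {wK}).algebraMap_mem (⟨sK, hsmem⟩ : Kplus)
    have hsinv : sK⁻¹ ∈ Algebra.adjoin Kplus {wK} := by
      have h3 := (Algebra.adjoin Kplus {wK}).algebraMap_mem ((⟨sK, hsmem⟩ : Kplus)⁻¹)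
      rwa [map_inv₀] at h3
    have hqmem : (q : K) ∈ Algebra.adjoin Kplus {wK} := by
      have := hscalar q (Algebra.adjoin Kplus {wK})
      rwa [eq_ratCast] at this
    have hx2eq : x2K = (q : K) * (wK + wK + 1) * sK⁻¹ := by
      rw [eq_mul_inv_iff_mul_eq₀ hs0]
      linear_combination hx2w
    have hx2mem : x2K ∈ Algebra.adjoin Kplus {wK} := by
      rw [hx2eq]
      exact Subalgebra.mul_mem _ (Subalgebra.mul_mem _ hqmem
        (Subalgebra.add_mem _ (Subalgebra.add_mem _ h1 h1) (Subalgebra.one_mem _))) hsinv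
    have hπeq : algebraMap ℚ K (1/2) * (sK + x2K) = π := by
      rw [hsx2, ← mul_assoc, h12, one_mul]
    rw [← hπeq]
    exact Subalgebra.mul_mem _ (hscalar _ _) (Subalgebra.add_mem _ h2 hx2mem)
  -- integral elements
  have hqZint : algebraMap ℤ K ((p:ℤ)^n) = (q : K) := by
    rw [hq]; push_cast; ring
  have hx2int : IsIntegral ℤ x2K := by
    refine ⟨X ^ 2 + C ((p:ℤ)^n), by monicity!, ?_⟩
    simp only [eval₂_add, eval₂_pow, eval₂_X, eval₂_C, hqZint]
    rw [hx2sq]; ring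
  have hwint : IsIntegral ℤ wK := by
    refine ⟨X ^ 2 + X + 1, by monicity!, ?_⟩
    simp only [eval₂_add, eval₂_pow, eval₂_X, eval₂_one]
    linear_combination hw
  set x2 : 𝓞 K := ⟨x2K, hx2int⟩ with hx2mk
  set w : 𝓞 K := ⟨wK, hwint⟩ with hwmk
  have hcoex2 : algebraMap (𝓞 K) K x2 = x2K := rfl
  have hcoew : algebraMap (𝓞 K) K w = wK := rfl
  have hx2gen : Algebra.adjoin Kplus {algebraMap (𝓞 K) K x2} = ⊤ := by
    rw [hcoex2]; exact hgen_aux _ hπx2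
  have hwgen : Algebra.adjoin Kplus {algebraMap (𝓞 K) K w} = ⊤ := by
    rw [hcoew]; exact hgen_aux _ hπw
  -- minimal polynomials over 𝓞 Kplus
  have hpcast : algebraMap (𝓞 Kplus) (𝓞 K) (((p : 𝓞 Kplus)) ^ n) = (p : 𝓞 K) ^ n := by
    rw [map_pow, map_natCast]
  have hx2sqO : x2 ^ 2 = -((p : 𝓞 K) ^ n) := by
    apply NumberField.RingOfIntegers.ext
    show x2K ^ 2 = -((p : K) ^ n)
    rw [hx2sq, hpn]
  have hwO : w ^ 2 + w + 1 = 0 := by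
    apply NumberField.RingOfIntegers.ext
    show wK ^ 2 + wK + 1 = 0
    exact hw
  have hGxroot : aeval x2 (X ^ 2 + C ((p : 𝓞 Kplus) ^ n) : (𝓞 Kplus)[X]) = 0 := by
    simp only [map_add, map_pow, aeval_X, aeval_C, map_natCast]
    rw [hx2sqO]; ring
  have hGwroot : aeval w (X ^ 2 + X + 1 : (𝓞 Kplus)[X]) = 0 := by
    simp only [map_add, map_pow, aeval_X, map_one]
    linear_combination hwO
  have hminx2 : minpoly (𝓞 Kplus) x2 = X ^ 2 + C ((p : 𝓞 Kplus) ^ n) :=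
    minpoly_eq_of_gen Kplus hrank2 x2 _ (by monicity!) (by compute_degree!) hGxroot hx2gen
  have hminw : minpoly (𝓞 Kplus) w = X ^ 2 + X + 1 :=
    minpoly_eq_of_gen Kplus hrank2 w _ (by monicity!) (by compute_degree!) hGwroot hwgen
  have hderx2 : aeval x2 (derivative (minpoly (𝓞 Kplus) x2)) = 2 * x2 := by
    rw [hminx2]
    simp [map_ofNat, derivative_pow, derivative_natCast]
  have hderw : aeval w (derivative (minpoly (𝓞 Kplus) w)) = 2 * w + 1 := by
    rw [hminw]
    simp [map_ofNat, one_add_one_eq_two]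
  have hxa : (aeval x2 (derivative (minpoly (𝓞 Kplus) x2))) ^ 2
      = algebraMap ℤ (𝓞 K) (-(4 * (p:ℤ)^n)) := by
    rw [hderx2, eq_intCast]
    push_cast
    linear_combination (4 : 𝓞 K) * hx2sqO
  have hwb : (aeval w (derivative (minpoly (𝓞 Kplus) w))) ^ 2
      = algebraMap ℤ (𝓞 K) (-3) := by
    rw [hderw, eq_intCast]
    push_cast
    linear_combination (4 : 𝓞 K) * hwO
  -- coprimality
  have hnotdvd : ¬ (3 ∣ p) := by
    intro h
    obtain ⟨c, rfl⟩ := h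
    omega
  have hcop : Nat.Coprime (4 * p ^ n) 3 := by
    exact Nat.Coprime.mul (by norm_num)
      ((Nat.coprime_comm.mp ((Nat.Prime.coprime_iff_not_dvd (by norm_num)).mpr hnotdvd)).pow_left n)
  have hab : IsCoprime (-(4 * (p:ℤ)^n)) (-3 : ℤ) := by
    rw [Int.isCoprime_iff_gcd_eq_one]
    have : Int.gcd (-(4 * (p:ℤ)^n)) (-3 : ℤ) = Nat.gcd (4 * p ^ n) 3 := by
      rw [Int.gcd]
      simp [Int.natAbs_neg, Int.natAbs_mul, Int.natAbs_pow]
    rw [this]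
    exact hcop
  exact gen_ram K Kplus x2 w hx2gen hwgen _ _ hab hxa hwb
end

section
/- Let p be a prime with p ≡ 1 (mod 3) (and, if n is even, assume in addition p ≡ 3 (mod 4)), let n ≥ 1, let q = p^n, let K = ℚ[X]/(X⁴ − qX² + q²), let π be the image of X in K, and let K⁺ = ℚ(π + q/π). Then there is a unique prime ideal 𝔄 of the ring of integers of K⁺ lying over the rational prime 3, and 𝔄 is inert in K/K⁺: the extension of 𝔄 to the ring of integers of K is a prime ideal. -/
open Polynomial NumberField

set_option maxHeartbeats 2000000 in
set_option synthInstance.maxHeartbeats 1000000 in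
theorem aux_prime_over_three_inert (p n : ℕ) (hp : p.Prime) (hp3 : p % 3 = 1)
    (hn : 1 ≤ n) (f : ℚ[X])
    (hf : f = X ^ 4 - C ((p : ℚ) ^ n) * X ^ 2 + C (((p : ℚ) ^ n) ^ 2))
    [Fact (Irreducible f)] :
    (∃! A : Ideal (𝓞 (IntermediateField.adjoin ℚ
        {AdjoinRoot.root f + ((p : AdjoinRoot f) ^ n) * (AdjoinRoot.root f)⁻¹})), A.IsPrime ∧
        A.comap (algebraMap ℤ (𝓞 (IntermediateField.adjoin ℚ
          {AdjoinRoot.root f + ((p : AdjoinRoot f) ^ n) * (AdjoinRoot.root f)⁻¹}))) =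
          Ideal.span {(3 : ℤ)}) ∧
    (∀ A : Ideal (𝓞 (IntermediateField.adjoin ℚ
        {AdjoinRoot.root f + ((p : AdjoinRoot f) ^ n) * (AdjoinRoot.root f)⁻¹})), A.IsPrime →
        A.comap (algebraMap ℤ (𝓞 (IntermediateField.adjoin ℚ
          {AdjoinRoot.root f + ((p : AdjoinRoot f) ^ n) * (AdjoinRoot.root f)⁻¹}))) =
          Ideal.span {(3 : ℤ)} →
        (A.map (algebraMap (𝓞 (IntermediateField.adjoin ℚ
          {AdjoinRoot.root f + ((p : AdjoinRoot f) ^ n) * (AdjoinRoot.root f)⁻¹}))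
          (𝓞 (AdjoinRoot f)))).IsPrime) := by
  set K := AdjoinRoot f with hK
  have hNF : NumberField K := inferInstance
  set π := AdjoinRoot.root f with hπdef
  have hπ : π ^ 4 - (p : K) ^ n * π ^ 2 + ((p : K) ^ n) ^ 2 = 0 := by
    have h0 : (Polynomial.aeval π)
        (X ^ 4 - C ((p : ℚ) ^ n) * X ^ 2 + C (((p : ℚ) ^ n) ^ 2)) = 0 := by
      rw [← hf, aeval_def]; exact AdjoinRoot.eval₂_root f
    simpa [map_pow, map_natCast] using h0
  have hπ0 : π ≠ 0 := by
    intro h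
    rw [h] at hπ
    have hQ0 : ((p : K) ^ n) = 0 := by
      have h2 : ((p : K) ^ n) ^ 2 = 0 := by linear_combination hπ
      exact pow_eq_zero_iff (n := 2) (by norm_num) |>.mp h2
    have hpK : (p : K) = 0 :=
      pow_eq_zero_iff (Nat.one_le_iff_ne_zero.mp hn) |>.mp hQ0
    exact hp.ne_zero (Nat.cast_eq_zero.mp hpK)
  set s : K := π + (p : K) ^ n * π⁻¹ with hsdef
  have hsπ : s * π = π ^ 2 + (p : K) ^ n := by
    have hinv : π⁻¹ * π = 1 := inv_mul_cancel₀ hπ0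
    rw [hsdef]; linear_combination (p : K) ^ n * hinv
  have hs2 : s ^ 2 = 3 * (p : K) ^ n := by
    have key : s ^ 2 * π ^ 2 = (3 * (p : K) ^ n) * π ^ 2 := by
      linear_combination (s * π + π ^ 2 + (p : K) ^ n) * hsπ + hπ
    exact mul_right_cancel₀ (pow_ne_zero 2 hπ0) key
  -- integrality of s and π
  have hsint : IsIntegral ℤ s := by
    refine ⟨X ^ 2 - C (3 * (p : ℤ) ^ n), monic_X_pow_sub_C _ two_ne_zero, ?_⟩
    have h2 : Polynomial.eval₂ (algebraMap ℤ K) s (X ^ 2 - C (3 * (p : ℤ) ^ n)) =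
        s ^ 2 - ((3 * (p : ℤ) ^ n : ℤ) : K) := by
      simp [eval₂_sub, eval₂_pow]
      rw [Int.cast_mul, Int.cast_pow, Int.cast_natCast, Int.cast_ofNat]
    rw [h2, hs2, Int.cast_mul, Int.cast_pow, Int.cast_natCast, Int.cast_ofNat]; ring
  have hπint : IsIntegral ℤ π := by
    refine ⟨X ^ 4 - C ((p : ℤ) ^ n) * X ^ 2 + C (((p : ℤ) ^ n) ^ 2), ?_, ?_⟩
    · monicity!
    · have h2 : Polynomial.eval₂ (algebraMap ℤ K) π
          (X ^ 4 - C ((p : ℤ) ^ n) * X ^ 2 + C (((p : ℤ) ^ n) ^ 2)) =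
          π ^ 4 - (p : K) ^ n * π ^ 2 + ((p : K) ^ n) ^ 2 := by
        push_cast [eval₂_add, eval₂_sub, eval₂_mul, eval₂_pow, eval₂_X, eval₂_C]
        ring
      rw [h2, hπ]
  -- Kplus and sO
  set Kplus := IntermediateField.adjoin ℚ {s} with hKp
  have hNFp : NumberField Kplus := inferInstance
  set sP : Kplus := ⟨s, IntermediateField.mem_adjoin_simple_self ℚ s⟩ with hsP
  have hsPval : algebraMap Kplus K sP = s := rfl
  have sOint : IsIntegral ℤ sP :=
    (isIntegral_algebraMap_iff (algebraMap Kplus K).injective).mp (hsPval ▸ hsint)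
  set sO : 𝓞 Kplus := ⟨sP, sOint⟩ with hsO
  have hsPsq : sP ^ 2 = 3 * (p : Kplus) ^ n := by
    apply (algebraMap Kplus K).injective
    push_cast [map_pow, map_mul, map_ofNat, hsPval]
    exact_mod_cast hs2
  have h1 : sO ^ 2 = 3 * (p : 𝓞 Kplus) ^ n := by
    apply NumberField.RingOfIntegers.ext
    push_cast [map_pow, map_mul, map_ofNat]
    exact_mod_cast hsPsq
  -- 3 * p^n is not a rational square
  have hnsq : ∀ b : ℚ, b ^ 2 ≠ 3 * (p : ℚ) ^ n := by
    intro b hb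
    have hbint : IsIntegral ℤ b := by
      refine ⟨X ^ 2 - C (3 * (p : ℤ) ^ n), monic_X_pow_sub_C _ two_ne_zero, ?_⟩
      have h2 : Polynomial.eval₂ (algebraMap ℤ ℚ) b (X ^ 2 - C (3 * (p : ℤ) ^ n)) =
          b ^ 2 - ((3 * (p : ℤ) ^ n : ℤ) : ℚ) := by
        simp [eval₂_sub, eval₂_pow]
      rw [h2, hb]; push_cast; ring
    obtain ⟨m, hm⟩ := IsIntegrallyClosed.isIntegral_iff.mp hbint
    have hm' : (m : ℚ) = b := by rw [← hm]; simp
    rw [← hm'] at hb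
    have hmeq : m ^ 2 = 3 * (p : ℤ) ^ n := by
      have h9 : ((m ^ 2 : ℤ) : ℚ) = ((3 * (p : ℤ) ^ n : ℤ) : ℚ) := by
        push_cast
        linear_combination hb
      exact_mod_cast h9
    have h3m : (3 : ℤ) ∣ m := by
      refine Int.prime_three.dvd_of_dvd_pow (n := 2) ⟨(p : ℤ) ^ n, hmeq⟩
    obtain ⟨k, rfl⟩ := h3m
    have h3pn : (3 : ℤ) ∣ (p : ℤ) ^ n := ⟨k ^ 2, by linarith [hmeq]⟩
    have h3p : (3 : ℤ) ∣ (p : ℤ) := Int.prime_three.dvd_of_dvd_pow h3pn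
    have h3pnat : (3 : ℕ) ∣ p := by exact_mod_cast h3p
    omega
  -- finrank of Kplus is 2
  have hfinKp : Module.finrank ℚ Kplus = 2 := by
    have hsintQ : IsIntegral ℚ s := hsint.tower_top
    have hmin : minpoly ℚ s = X ^ 2 - C (3 * (p : ℚ) ^ n) := by
      refine (minpoly.eq_of_irreducible_of_monic
        (X_pow_sub_C_irreducible_of_prime Nat.prime_two hnsq) ?_
        (monic_X_pow_sub_C _ two_ne_zero)).symm
      have h2 : (Polynomial.aeval s) (X ^ 2 - C (3 * (p : ℚ) ^ n)) =
          s ^ 2 - ((3 * (p : ℚ) ^ n : ℚ) : K) := by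
        simp [map_pow]
      rw [h2, hs2]; push_cast; ring
    rw [hKp, IntermediateField.adjoin.finrank hsintQ, hmin]
    compute_degree!
  -- norm of (3) in O Kplus
  have hN3p : Ideal.absNorm (Ideal.span {(3 : 𝓞 Kplus)}) = 9 := by
    have h3 : (3 : 𝓞 Kplus) = algebraMap ℤ (𝓞 Kplus) 3 := by simp
    rw [Ideal.absNorm_span_singleton, h3,
      Algebra.norm_algebraMap_of_basis (RingOfIntegers.basis Kplus),
      ← Module.finrank_eq_card_chooseBasisIndex, RingOfIntegers.rank, hfinKp]
    norm_num
  -- the ideal A0 and its square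
  set A0 : Ideal (𝓞 Kplus) := Ideal.span {(3 : 𝓞 Kplus), sO} with hA0
  obtain ⟨a, b, hab⟩ : IsCoprime (3 : ℤ) ((p : ℤ) ^ n) := by
    have hcop : Nat.Coprime 3 (p ^ n) :=
      Nat.Coprime.pow_right n ((Nat.coprime_primes Nat.prime_three hp).mpr (by omega))
    have := Nat.isCoprime_iff_coprime.mpr hcop
    push_cast at this ⊢
    exact this
  have habO : (a : 𝓞 Kplus) * 3 + (b : 𝓞 Kplus) * (p : 𝓞 Kplus) ^ n = 1 := by
    exact_mod_cast congrArg (Int.cast : ℤ → 𝓞 Kplus) hab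
  have hA0sq : A0 * A0 = Ideal.span {(3 : 𝓞 Kplus)} := by
    apply le_antisymm
    · rw [Ideal.mul_le]
      intro r hr t ht
      rw [hA0, Ideal.mem_span_pair] at hr ht
      obtain ⟨a₁, b₁, rfl⟩ := hr
      obtain ⟨a₂, b₂, rfl⟩ := ht
      rw [Ideal.mem_span_singleton]
      exact ⟨3 * a₁ * a₂ + a₁ * b₂ * sO + b₁ * a₂ * sO + b₁ * b₂ * (p : 𝓞 Kplus) ^ n,
        by linear_combination (b₁ * b₂) * h1⟩
    · rw [Ideal.span_singleton_le_iff_mem]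
      have h9 : (3 : 𝓞 Kplus) * 3 ∈ A0 * A0 :=
        Ideal.mul_mem_mul (Ideal.subset_span (by simp)) (Ideal.subset_span (by simp))
      have hss : sO * sO ∈ A0 * A0 :=
        Ideal.mul_mem_mul (Ideal.subset_span (by simp)) (Ideal.subset_span (by simp))
      have key : (3 : 𝓞 Kplus) = (a : 𝓞 Kplus) * ((3 : 𝓞 Kplus) * 3)
          + (b : 𝓞 Kplus) * (sO * sO) := by
        linear_combination (-(b : 𝓞 Kplus)) * h1 - 3 * habO
      rw [key]
      exact add_mem (Ideal.mul_mem_left _ _ h9) (Ideal.mul_mem_left _ _ hss)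
  have habsA0 : Ideal.absNorm A0 = 3 := by
    have hmul := map_mul Ideal.absNorm A0 A0
    rw [hA0sq, hN3p] at hmul
    have h4 : Ideal.absNorm A0 < 4 := by nlinarith
    interval_cases h : (Ideal.absNorm A0) <;> omega
  have hA0prime : A0.IsPrime :=
    Ideal.isPrime_of_irreducible_absNorm
      (by rw [habsA0]; exact Nat.prime_iff.mp Nat.prime_three |>.irreducible)
  have hA0bot : A0 ≠ ⊥ := by
    intro h; rw [h] at habsA0; simp at habsA0
  have hA0max : A0.IsMaximal := Ideal.IsPrime.isMaximal hA0prime hA0bot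
  have h3mem : (3 : 𝓞 Kplus) ∈ A0 := Ideal.subset_span (by simp)
  have hcomapA0 : A0.comap (algebraMap ℤ (𝓞 Kplus)) = Ideal.span {(3 : ℤ)} := by
    have hle : Ideal.span {(3 : ℤ)} ≤ A0.comap (algebraMap ℤ (𝓞 Kplus)) := by
      rw [Ideal.span_singleton_le_iff_mem, Ideal.mem_comap]
      simpa using h3mem
    have hmax3 : (Ideal.span {(3 : ℤ)}).IsMaximal :=
      PrincipalIdealRing.isMaximal_of_irreducible Int.prime_three.irreducible
    have hcp := hA0prime.comap (algebraMap ℤ (𝓞 Kplus))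
    exact (hmax3.eq_of_le hcp.ne_top hle).symm
  have huniq : ∀ A : Ideal (𝓞 Kplus), A.IsPrime →
      A.comap (algebraMap ℤ (𝓞 Kplus)) = Ideal.span {(3 : ℤ)} → A = A0 := by
    intro A hA hcA
    have h3A : (3 : 𝓞 Kplus) ∈ A := by
      have h3c : (3 : ℤ) ∈ A.comap (algebraMap ℤ (𝓞 Kplus)) := by
        rw [hcA]; exact Ideal.mem_span_singleton_self 3
      rw [Ideal.mem_comap] at h3c
      simpa using h3c
    have hsA : sO ∈ A := by
      refine hA.mem_of_pow_mem 2 ?_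
      rw [h1]
      exact Ideal.mul_mem_right _ _ h3A
    have hle : A0 ≤ A := by
      rw [hA0, Ideal.span_le]
      simp [Set.insert_subset_iff, h3A, hsA]
    exact (hA0max.eq_of_le hA.ne_top hle).symm
  -- finrank of K is 4
  have hf0 : f ≠ 0 := (Fact.out : Irreducible f).ne_zero
  have hdeg : f.natDegree = 4 := by rw [hf]; compute_degree!
  have hfinK : Module.finrank ℚ K = 4 := by
    rw [(AdjoinRoot.powerBasis hf0).finrank]
    exact hdeg
  have hN3K : Ideal.absNorm (Ideal.span {(3 : 𝓞 K)}) = 81 := by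
    have h3 : (3 : 𝓞 K) = algebraMap ℤ (𝓞 K) 3 := by simp
    rw [Ideal.absNorm_span_singleton, h3,
      Algebra.norm_algebraMap_of_basis (RingOfIntegers.basis K),
      ← Module.finrank_eq_card_chooseBasisIndex, RingOfIntegers.rank, hfinK]
    norm_num
  refine ⟨⟨A0, ⟨hA0prime, hcomapA0⟩, fun A hA => huniq A hA.1 hA.2⟩, fun A hA hcA => ?_⟩
  rw [huniq A hA hcA]
  -- now show the extension of A0 is prime
  set B := A0.map (algebraMap (𝓞 Kplus) (𝓞 K)) with hB
  have hBsq : B * B = Ideal.span {(3 : 𝓞 K)} := by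
    rw [hB, ← Ideal.map_mul, hA0sq, Ideal.map_span, Set.image_singleton, map_ofNat]
  have hBN : Ideal.absNorm B = 9 := by
    have hmul := map_mul Ideal.absNorm B B
    rw [hBsq, hN3K] at hmul
    have h4 : Ideal.absNorm B < 10 := by nlinarith
    interval_cases h : (Ideal.absNorm B) <;> omega
  have hBtop : B ≠ ⊤ := by
    intro h; rw [h] at hBN; simp at hBN
  haveI hRnt : Nontrivial ((𝓞 K) ⧸ B) := Ideal.Quotient.nontrivial_iff.mpr hBtop
  have hcard : Nat.card ((𝓞 K) ⧸ B) = 9 := by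
    rw [← Submodule.cardQuot_apply, ← Ideal.absNorm_apply]; exact hBN
  haveI hRfin : Finite ((𝓞 K) ⧸ B) :=
    Nat.finite_of_card_ne_zero (by rw [hcard]; norm_num)
  have h3B : (3 : 𝓞 K) ∈ B := by
    have := Ideal.mem_map_of_mem (algebraMap (𝓞 Kplus) (𝓞 K)) h3mem
    rwa [map_ofNat] at this
  have h30 : (3 : (𝓞 K) ⧸ B) = 0 := by
    rw [show (3 : (𝓞 K) ⧸ B) = Ideal.Quotient.mk B 3 from (map_ofNat _ 3).symm,
      Ideal.Quotient.eq_zero_iff_mem]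
    exact h3B
  haveI : CharP ((𝓞 K) ⧸ B) 3 := (CharP.charP_iff_prime_eq_zero Nat.prime_three).mpr h30
  -- the generator π as an algebraic integer
  set πO : 𝓞 K := ⟨π, hπint⟩ with hπO
  have hsOK : algebraMap (𝓞 Kplus) (𝓞 K) sO ∈ B :=
    Ideal.mem_map_of_mem _ (Ideal.subset_span (by simp))
  have hsOKval : algebraMap (𝓞 K) K (algebraMap (𝓞 Kplus) (𝓞 K) sO) = s := rfl
  have hid : πO ^ 2 + (p : 𝓞 K) ^ n = (algebraMap (𝓞 Kplus) (𝓞 K) sO) * πO := by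
    apply NumberField.RingOfIntegers.ext
    push_cast [map_pow, map_mul, map_add, hsOKval]
    exact hsπ.symm
  have hcnat : p ^ n = 3 * (p ^ n / 3) + 1 := by
    have hqmod : p ^ n % 3 = 1 := by
      rw [Nat.pow_mod, hp3, Nat.one_pow]
    omega
  have hcast : (p : 𝓞 K) ^ n = 3 * ((p ^ n / 3 : ℕ) : 𝓞 K) + 1 := by
    exact_mod_cast congrArg (Nat.cast : ℕ → 𝓞 K) hcnat
  have hkey : πO ^ 2 + 1 ∈ B := by
    have h2 : πO ^ 2 + 1 = (algebraMap (𝓞 Kplus) (𝓞 K) sO) * πO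
        - 3 * ((p ^ n / 3 : ℕ) : 𝓞 K) := by
      linear_combination hid - hcast
    rw [h2]
    exact sub_mem (Ideal.mul_mem_right _ _ hsOK) (Ideal.mul_mem_right _ _ h3B)
  -- F9
  have hX21 : (X ^ 2 + 1 : (ZMod 3)[X]) = X ^ 2 - C (-1) := by
    simp [map_neg, map_one]
  have hirr9 : Irreducible (X ^ 2 + 1 : (ZMod 3)[X]) := by
    rw [hX21]
    exact X_pow_sub_C_irreducible_of_prime Nat.prime_two (by decide)
  haveI : Fact (Irreducible (X ^ 2 + 1 : (ZMod 3)[X])) := ⟨hirr9⟩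
  have hroot : Polynomial.eval₂ (ZMod.castHom (dvd_refl 3) ((𝓞 K) ⧸ B))
      (Ideal.Quotient.mk B πO) (X ^ 2 + 1) = 0 := by
    have h2 : Polynomial.eval₂ (ZMod.castHom (dvd_refl 3) ((𝓞 K) ⧸ B))
        (Ideal.Quotient.mk B πO) (X ^ 2 + 1) =
        (Ideal.Quotient.mk B πO) ^ 2 + 1 := by
      simp [eval₂_add, eval₂_pow, eval₂_X, eval₂_one]
    rw [h2, show ((Ideal.Quotient.mk B πO) ^ 2 + 1 : (𝓞 K) ⧸ B) =
      Ideal.Quotient.mk B (πO ^ 2 + 1) by rw [map_add, map_pow, map_one],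
      Ideal.Quotient.eq_zero_iff_mem]
    exact hkey
  set φ9 := AdjoinRoot.lift (ZMod.castHom (dvd_refl 3) ((𝓞 K) ⧸ B))
    (Ideal.Quotient.mk B πO) hroot with hφ9
  have hinj : Function.Injective φ9 := φ9.injective
  haveI : Module.Finite (ZMod 3) (AdjoinRoot (X ^ 2 + 1 : (ZMod 3)[X])) :=
    Module.Finite.of_basis (AdjoinRoot.powerBasis hirr9.ne_zero).basis
  haveI : Finite (AdjoinRoot (X ^ 2 + 1 : (ZMod 3)[X])) := Module.finite_of_finite (ZMod 3)
  haveI : Fintype (AdjoinRoot (X ^ 2 + 1 : (ZMod 3)[X])) := Fintype.ofFinite _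
  haveI : Fintype ((𝓞 K) ⧸ B) := Fintype.ofFinite _
  have hdim2 : Module.finrank (ZMod 3) (AdjoinRoot (X ^ 2 + 1 : (ZMod 3)[X])) = 2 := by
    rw [(AdjoinRoot.powerBasis hirr9.ne_zero).finrank]
    show (X ^ 2 + 1 : (ZMod 3)[X]).natDegree = 2
    compute_degree!
  have hcardF9 : Fintype.card (AdjoinRoot (X ^ 2 + 1 : (ZMod 3)[X])) = 9 := by
    rw [Module.card_eq_pow_finrank (K := ZMod 3), hdim2, ZMod.card]
    norm_num
  have hcardR : Fintype.card ((𝓞 K) ⧸ B) = 9 := by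
    rw [← Nat.card_eq_fintype_card]; exact hcard
  have hbij : Function.Bijective φ9 :=
    (Fintype.bijective_iff_injective_and_card φ9).mpr ⟨hinj, by rw [hcardF9, hcardR]⟩
  have hfield : IsField ((𝓞 K) ⧸ B) :=
    MulEquiv.isField (Field.toIsField (AdjoinRoot (X ^ 2 + 1 : (ZMod 3)[X])))
      (RingEquiv.ofBijective φ9 hbij).symm.toMulEquiv
  exact (Ideal.Quotient.maximal_of_isField B hfield).isPrime

theorem prime_over_three_inert (p n : ℕ) (hp : p.Prime) (hp3 : p % 3 = 1)
    (hp4 : Even n → p % 4 = 3) (hn : 1 ≤ n) (f : ℚ[X])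
    (hf : f = X ^ 4 - C ((p : ℚ) ^ n) * X ^ 2 + C (((p : ℚ) ^ n) ^ 2))
    [Fact (Irreducible f)] :
    letI K := AdjoinRoot f
    letI Kplus := IntermediateField.adjoin ℚ
        {AdjoinRoot.root f + ((p : K) ^ n) * (AdjoinRoot.root f)⁻¹}
    (∃! A : Ideal (𝓞 Kplus), A.IsPrime ∧
        A.comap (algebraMap ℤ (𝓞 Kplus)) = Ideal.span {(3 : ℤ)}) ∧
    (∀ A : Ideal (𝓞 Kplus), A.IsPrime →
        A.comap (algebraMap ℤ (𝓞 Kplus)) = Ideal.span {(3 : ℤ)} →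
        (A.map (algebraMap (𝓞 Kplus) (𝓞 K))).IsPrime) := by
  exact aux_prime_over_three_inert p n hp hp3 hn f hf
end

section
/- Let p be an odd prime, let n ≥ 1, let q = p^n, and assume either that n is odd and p ≡ 1 (mod 4), or that n is even and p ≡ 5 (mod 8). Then the polynomial X⁴ + q² is irreducible over ℚ; moreover, letting K = ℚ[X]/(X⁴ + q²) with π the image of X and K⁺ = ℚ(π + q/π), one has (π + q/π)² = 2q, and some prime ideal of the ring of integers of K⁺ lying over the rational prime 2 is ramified in K (has ramification index 2 in the ring of integers of K). -/
open Polynomial NumberField Multiplicative IsDedekindDomain IsDedekindDomain.HeightOneSpectrum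

theorem aux_irr_int (q : ℤ) (hq : Odd q) : Irreducible (X ^ 4 + C (q ^ 2) : ℤ[X]) := by
  obtain ⟨k, hk⟩ := hq
  obtain ⟨t, ht⟩ : ∃ t : ℤ, q ^ 2 + 1 = 2 * (2 * t + 1) := ⟨k * k + k, by rw [hk]; ring⟩
  set r : ℤ[X] := C 4 * X ^ 3 + C 6 * X ^ 2 + C 4 * X + C (q ^ 2 + 1) with hr
  set G : ℤ[X] := X ^ 4 + r with hGdef
  have hrdeg : r.degree < 4 := by
    have h3 : r.degree ≤ 3 := by rw [hr]; compute_degree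
    exact lt_of_le_of_lt h3 (by decide)
  have hGmonic : G.Monic := monic_X_pow_add hrdeg
  have hdeg : G.degree = 4 := by
    rw [hGdef]
    rw [degree_add_eq_left_of_degree_lt (by simpa [degree_X_pow] using hrdeg)]
    exact degree_X_pow 4
  have hP : (Ideal.span {(2 : ℤ)}).IsPrime :=
    (Ideal.span_singleton_prime two_ne_zero).mpr Int.prime_two
  have hG : Irreducible G := by
    refine irreducible_of_eisenstein_criterion hP ?_ ?_ ?_ ?_ hGmonic.isPrimitive
    · rw [hGmonic.leadingCoeff]
      simp [Ideal.mem_span_singleton]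
    · intro j hj
      rw [hdeg] at hj
      have hj4 : j < 4 := by exact_mod_cast hj
      interval_cases j <;>
        · simp only [hGdef, hr, coeff_add, coeff_C_mul, coeff_X_pow, coeff_C, coeff_X_one,
            coeff_X, Ideal.mem_span_singleton]
          norm_num
          try omega
    · rw [hdeg]; decide
    · rw [Ideal.span_singleton_pow]
      simp only [hGdef, hr, coeff_add, coeff_C_mul, coeff_X_pow, coeff_C, coeff_X]
      norm_num [Ideal.mem_span_singleton]
      omega
  have hcomp : (algEquivAevalXAddC (1 : ℤ)) (X ^ 4 + C (q ^ 2)) = G := by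
    rw [algEquivAevalXAddC_apply, map_add, map_pow, aeval_X, aeval_C]
    rw [hGdef, hr]
    simp only [algebraMap_int_eq, eq_intCast, C_eq_intCast]
    push_cast
    ring
  exact (MulEquiv.irreducible_iff (algEquivAevalXAddC (1 : ℤ)).toMulEquiv).mp (hcomp ▸ hG)

theorem aux_irr_rat (q : ℕ) (hq : Odd q) : Irreducible (X ^ 4 + C ((q : ℚ) ^ 2) : ℚ[X]) := by
  have hZ : Irreducible (X ^ 4 + C ((q : ℤ) ^ 2) : ℤ[X]) := aux_irr_int q (by exact_mod_cast hq)
  have hmon : (X ^ 4 + C ((q : ℤ) ^ 2) : ℤ[X]).Monic := by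
    apply monic_X_pow_add
    exact lt_of_le_of_lt (degree_C_le) (by decide)
  have := (hmon.irreducible_iff_irreducible_map_fraction_map (K := ℚ)).mp hZ
  have hmap : (X ^ 4 + C ((q : ℤ) ^ 2) : ℤ[X]).map (algebraMap ℤ ℚ) = X ^ 4 + C ((q : ℚ) ^ 2) := by
    simp [Polynomial.map_add, Polynomial.map_pow, map_X, map_C]
  rwa [hmap] at this

theorem aux_no_sqrt (q : ℕ) (hq : Odd q) : ∀ b : ℚ, b ^ 2 ≠ 2 * (q : ℚ) := by
  intro b hb
  haveI : Fact (Nat.Prime 2) := ⟨Nat.prime_two⟩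
  have hq0 : q ≠ 0 := by rintro rfl; simp at hq
  have hb0 : b ≠ 0 := by
    intro h
    rw [h] at hb
    have : (q : ℚ) = 0 := by linarith [hb.symm]
    exact hq0 (by exact_mod_cast this)
  have h2q : (2 * (q:ℚ)) = ((2 * q : ℕ) : ℚ) := by push_cast; ring
  have hval : padicValRat 2 (b ^ 2) = padicValRat 2 ((2 * q : ℕ) : ℚ) := by rw [hb, h2q]
  rw [padicValRat.pow b] at hval
  rw [padicValRat.of_nat] at hval
  have hmul : padicValNat 2 (2 * q) = 1 + padicValNat 2 q := by
    rw [padicValNat.mul (by norm_num) hq0, padicValNat.self (by norm_num)]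
  have hq2 : padicValNat 2 q = 0 := padicValNat.eq_zero_of_not_dvd (by
    intro h; exact (Nat.not_even_iff_odd.mpr hq) (even_iff_two_dvd.mpr h))
  rw [hmul, hq2] at hval
  omega

theorem aux_coe_pow (j : ℤ) (k : ℕ) :
    ((ofAdd j : Multiplicative ℤ) : WithZero (Multiplicative ℤ)) ^ k
      = ((ofAdd ((k : ℤ) * j) : Multiplicative ℤ) : WithZero (Multiplicative ℤ)) := by
  rw [← WithZero.coe_pow, ← ofAdd_nsmul]
  simp [nsmul_eq_mul]

theorem aux_sq_le (a : WithZero (Multiplicative ℤ)) (j : ℤ)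
    (h : a ^ 2 ≤ ((ofAdd (2 * j) : Multiplicative ℤ) : WithZero (Multiplicative ℤ))) :
    a ≤ ((ofAdd j : Multiplicative ℤ) : WithZero (Multiplicative ℤ)) := by
  induction a using WithZero.recZeroCoe with
  | zero => exact zero_le'
  | coe x =>
    rw [← WithZero.coe_pow, WithZero.coe_le_coe] at h
    rw [WithZero.coe_le_coe]
    have hx : x = ofAdd (toAdd x) := rfl
    rw [hx] at h ⊢
    rw [← ofAdd_nsmul] at h
    rw [Multiplicative.ofAdd_le] at h ⊢
    simp only [nsmul_eq_mul, Nat.cast_ofNat] at h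
    linarith

theorem aux_le_trans (j j' : ℤ) (h : j ≤ j') :
    ((ofAdd j : Multiplicative ℤ) : WithZero (Multiplicative ℤ)) ≤ ofAdd j' := by
  rw [WithZero.coe_le_coe, Multiplicative.ofAdd_le]; exact h

theorem aux_absNorm_span_natCast (F : Type*) [Field F] [NumberField F] (c : ℕ) :
    Ideal.absNorm (Ideal.span {(c : 𝓞 F)}) = c ^ Module.finrank ℚ F := by
  rw [Ideal.absNorm_span_singleton,
    show ((c : 𝓞 F)) = algebraMap ℤ (𝓞 F) (c : ℤ) by rw [map_natCast],
    Algebra.norm_algebraMap_of_basis (Module.Free.chooseBasis ℤ (𝓞 F))]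
  rw [← Module.finrank_eq_card_chooseBasisIndex, NumberField.RingOfIntegers.rank]
  simp [Int.natAbs_pow]

set_option maxHeartbeats 2000000 in
theorem A00_ramified_over_two (p n : ℕ) (hp : p.Prime) (hodd : Odd p) (hn : 1 ≤ n)
    (hcase : (Odd n ∧ p % 4 = 1) ∨ (Even n ∧ p % 8 = 5)) :
    ∃ hirr : Irreducible (X ^ 4 + C (((p : ℚ) ^ n) ^ 2) : ℚ[X]),
      letI f : ℚ[X] := X ^ 4 + C (((p : ℚ) ^ n) ^ 2)
      haveI : Fact (Irreducible f) := ⟨hirr⟩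
      letI K := AdjoinRoot f
      letI π := AdjoinRoot.root f
      letI Kplus := IntermediateField.adjoin ℚ {π + ((p : K) ^ n) * π⁻¹}
      (π + ((p : K) ^ n) * π⁻¹) ^ 2 = 2 * (p : K) ^ n ∧
      ∃ P : Ideal (𝓞 Kplus), P.IsPrime ∧
        P.comap (algebraMap ℤ (𝓞 Kplus)) = Ideal.span {(2 : ℤ)} ∧
        ∃ Q : Ideal (𝓞 K), Q.IsPrime ∧
          Q.comap (algebraMap (𝓞 Kplus) (𝓞 K)) = P ∧
          Ideal.ramificationIdx' P Q = 2 := by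
  -- basic arithmetic setup
  have hq : Odd (p ^ n) := hodd.pow
  have hcast : (((p : ℚ)) ^ n) ^ 2 = ((p ^ n : ℕ) : ℚ) ^ 2 := by push_cast; ring
  have hirr : Irreducible (X ^ 4 + C (((p : ℚ) ^ n) ^ 2) : ℚ[X]) := by
    rw [hcast]; exact aux_irr_rat (p ^ n) hq
  refine ⟨hirr, ?_⟩
  set f : ℚ[X] := X ^ 4 + C (((p : ℚ) ^ n) ^ 2) with hfdef
  haveI : Fact (Irreducible f) := ⟨hirr⟩
  set K := AdjoinRoot f with hKdef
  set π := AdjoinRoot.root f with hπdef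
  haveI : CharZero K := charZero_of_injective_algebraMap (algebraMap ℚ K).injective
  have hf0 : f ≠ 0 := hirr.ne_zero
  have hfdeg : f.natDegree = 4 := by
    rw [hfdef]
    compute_degree!
  -- the root relation
  have hπ4 : π ^ 4 + ((p : K) ^ n) ^ 2 = 0 := by
    have h := AdjoinRoot.eval₂_root f
    rw [hfdef] at h
    simp only [eval₂_add, eval₂_pow, eval₂_X, eval₂_C] at h
    rw [show (AdjoinRoot.of f) (((p : ℚ) ^ n) ^ 2) = ((p : K) ^ n) ^ 2 by
      rw [← AdjoinRoot.algebraMap_eq]; push_cast; ring] at h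
    exact h
  have hpK : ((p : K)) ≠ 0 := Nat.cast_ne_zero.mpr hp.pos.ne'
  have hqK : ((p : K) ^ n) ≠ 0 := pow_ne_zero _ hpK
  have hπ0 : π ≠ 0 := by
    intro h
    rw [h] at hπ4
    simp at hπ4
    exact hp.pos.ne' hπ4.1
  -- the square identity
  have hπα : π * (π + ((p : K) ^ n) * π⁻¹) = π ^ 2 + (p : K) ^ n := by
    field_simp
  have hα2 : (π + ((p : K) ^ n) * π⁻¹) ^ 2 = 2 * (p : K) ^ n := by
    have h2 : π ^ 2 * (π + ((p : K) ^ n) * π⁻¹) ^ 2 = π ^ 2 * (2 * (p : K) ^ n) := by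
      calc π ^ 2 * (π + ((p : K) ^ n) * π⁻¹) ^ 2
          = (π * (π + ((p : K) ^ n) * π⁻¹)) ^ 2 := by ring
        _ = (π ^ 2 + (p : K) ^ n) ^ 2 := by rw [hπα]
        _ = π ^ 2 * (2 * (p : K) ^ n) := by linear_combination hπ4
    exact mul_left_cancel₀ (pow_ne_zero 2 hπ0) h2
  set α := π + ((p : K) ^ n) * π⁻¹ with hαdef
  -- number field instances
  haveI : FiniteDimensional ℚ K := (AdjoinRoot.powerBasis hf0).finite
  haveI : NumberField K := ⟨⟩
  have hrankK : Module.finrank ℚ K = 4 := by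
    rw [(AdjoinRoot.powerBasis hf0).finrank, AdjoinRoot.powerBasis_dim, hfdeg]
  set Kp := IntermediateField.adjoin ℚ {α} with hKpdef
  -- cast lemma for q in K
  have hqcast : ((p : K) ^ n) = ((p ^ n : ℕ) : K) := by push_cast; ring
  -- minpoly of α over ℚ
  have halg : ∀ c : ℚ, algebraMap ℚ K c = AdjoinRoot.of f c := fun c => rfl
  have hroot : (Polynomial.aeval α) (X ^ 2 - C (2 * ((p ^ n : ℕ) : ℚ))) = 0 := by
    rw [map_sub, map_pow, aeval_X, aeval_C, hα2, map_mul, map_ofNat, map_natCast, hqcast]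
    ring
  have hmonic2 : (X ^ 2 - C (2 * ((p ^ n : ℕ) : ℚ))).Monic := monic_X_pow_sub_C _ two_ne_zero
  have hirr2 : Irreducible (X ^ 2 - C (2 * ((p ^ n : ℕ) : ℚ))) :=
    X_pow_sub_C_irreducible_of_prime Nat.prime_two (aux_no_sqrt _ hq)
  have hminpoly : minpoly ℚ α = X ^ 2 - C (2 * ((p ^ n : ℕ) : ℚ)) :=
    (minpoly.eq_of_irreducible_of_monic hirr2 hroot hmonic2).symm
  have hαintQ : IsIntegral ℚ α := ⟨_, hmonic2, hroot⟩
  have hrankKp : Module.finrank ℚ Kp = 2 := by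
    rw [hKpdef, IntermediateField.adjoin.finrank hαintQ, hminpoly, natDegree_X_pow_sub_C]
  haveI : NumberField ↥Kp := NumberField.of_intermediateField Kp
  have hπ4' : π ^ 4 + ((p ^ n : ℕ) : K) ^ 2 = 0 := by rw [← hqcast]; exact hπ4
  -- the element αp of O_Kp
  have hαmem : α ∈ Kp := by rw [hKpdef]; exact IntermediateField.mem_adjoin_simple_self ℚ α
  set αp : Kp := ⟨α, hαmem⟩ with hαpdef
  have hcoeαp : (algebraMap Kp K) αp = α := rfl
  have hαp2 : αp ^ 2 = 2 * ((p ^ n : ℕ) : Kp) := by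
    apply (algebraMap Kp K).injective
    rw [map_pow, hcoeαp, map_mul, map_ofNat, map_natCast, hα2, hqcast]
  have hαpint : IsIntegral ℤ αp := by
    refine ⟨X ^ 2 - C ((2 * p ^ n : ℕ) : ℤ), monic_X_pow_sub_C _ two_ne_zero, ?_⟩
    rw [eval₂_sub, eval₂_pow, eval₂_X, eval₂_C, hαp2]
    rw [show (algebraMap ℤ ↥Kp) ((2 * p ^ n : ℕ) : ℤ) = 2 * ((p ^ n : ℕ) : Kp) by
      rw [show ((2 * p ^ n : ℕ) : ℤ) = 2 * ((p ^ n : ℕ) : ℤ) by push_cast; ring, map_mul,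
        map_ofNat, map_natCast]]
    ring
  set aOp : 𝓞 Kp := ⟨αp, hαpint⟩ with haOpdef
  -- π as an algebraic integer, and the Eisenstein relation
  have hπint : IsIntegral ℤ π := by
    refine ⟨X ^ 4 + C (((p ^ n : ℕ) : ℤ) ^ 2), ?_, ?_⟩
    · exact monic_X_pow_add (lt_of_le_of_lt degree_C_le (by decide))
    · rw [eval₂_add, eval₂_pow, eval₂_X, eval₂_C]
      rw [show (algebraMap ℤ K) (((p ^ n : ℕ) : ℤ) ^ 2) = ((p ^ n : ℕ) : K) ^ 2 by push_cast; ring]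
      exact hπ4'
  set πO : 𝓞 K := ⟨π, hπint⟩ with hπOdef
  set lam : 𝓞 K := πO - 1 with hlamdef
  obtain ⟨t, ht⟩ : ∃ t : ℤ, ((p ^ n : ℕ) : ℤ) ^ 2 + 1 = 2 * (2 * t + 1) := by
    obtain ⟨k, hk⟩ := hq
    exact ⟨(k : ℤ) * k + k, by push_cast [hk]; ring⟩
  set m : ℤ := 2 * t + 1 with hmdef
  set w : 𝓞 K := algebraMap ℤ (𝓞 K) m + 2 * lam ^ 3 + 3 * lam ^ 2 + 2 * lam with hwdef
  have htK : ((p ^ n : ℕ) : K) ^ 2 + 1 = 2 * ((m : ℤ) : K) := by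
    have h : ((((p ^ n : ℕ) : ℤ) ^ 2 + 1 : ℤ) : K) = ((2 * m : ℤ) : K) := by rw [ht]
    rw [Int.cast_add, Int.cast_pow, Int.cast_natCast, Int.cast_one, Int.cast_mul, Int.cast_ofNat] at h
    linear_combination h
  have hkey : (2 : 𝓞 K) * w = - lam ^ 4 := by
    apply NumberField.RingOfIntegers.ext
    rw [NumberField.RingOfIntegers.coe_eq_algebraMap, NumberField.RingOfIntegers.coe_eq_algebraMap]
    rw [hwdef]
    simp only [map_mul, map_add, map_pow, map_neg, map_sub, map_one, map_ofNat,
      NumberField.RingOfIntegers.map_mk, map_intCast]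
    rw [show ((algebraMap (𝓞 K) K) ((algebraMap ℤ (𝓞 K)) m)) = ((m : ℤ) : K) by
      rw [eq_intCast, map_intCast]]
    rw [show (algebraMap (𝓞 K) K) lam = π - 1 from rfl]
    linear_combination hπ4' - htK
  -- construct Q over 2
  have habs2K : Ideal.absNorm (Ideal.span {(2 : 𝓞 K)}) = 16 := by
    rw [show (2 : 𝓞 K) = ((2 : ℕ) : 𝓞 K) by norm_cast, aux_absNorm_span_natCast K 2, hrankK]
    norm_num
  have hspan2top : Ideal.span {(2 : 𝓞 K)} ≠ ⊤ := by
    intro h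
    rw [h, Ideal.absNorm_eq_one_iff.mpr rfl] at habs2K
    omega
  obtain ⟨Q, hQmax, hQle⟩ := Ideal.exists_le_maximal _ hspan2top
  have hQprime : Q.IsPrime := hQmax.isPrime
  have h2Q : (2 : 𝓞 K) ∈ Q := hQle (Ideal.mem_span_singleton_self _)
  have h2O : (2 : 𝓞 K) ≠ 0 := by
    intro h
    have h2 := congrArg (algebraMap (𝓞 K) K) h
    rw [map_ofNat, map_zero] at h2
    exact two_ne_zero h2
  have hQbot : Q ≠ ⊥ := by
    intro h
    rw [h] at h2Q
    exact h2O (Ideal.mem_bot.mp h2Q)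
  have hQcomapZ : Q.comap (algebraMap ℤ (𝓞 K)) = Ideal.span {(2 : ℤ)} := by
    have hsp : (Ideal.span {(2 : ℤ)}).IsPrime :=
      (Ideal.span_singleton_prime two_ne_zero).mpr Int.prime_two
    have hsb : (Ideal.span {(2 : ℤ)}) ≠ ⊥ := by simp [Ideal.span_singleton_eq_bot]
    have hsm : (Ideal.span {(2 : ℤ)}).IsMaximal := hsp.isMaximal hsb
    refine (hsm.eq_of_le (Ideal.comap_ne_top _ hQprime.ne_top) ?_).symm
    rw [Ideal.span_singleton_le_iff_mem, Ideal.mem_comap, map_ofNat]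
    exact h2Q
  -- P
  set P : Ideal (𝓞 Kp) := Q.comap (algebraMap (𝓞 Kp) (𝓞 K)) with hPdef
  have hPprime : P.IsPrime := Ideal.IsPrime.comap _
  have hPcomapZ : P.comap (algebraMap ℤ (𝓞 Kp)) = Ideal.span {(2 : ℤ)} := by
    rw [hPdef, Ideal.comap_comap,
      show (algebraMap (𝓞 Kp) (𝓞 K)).comp (algebraMap ℤ (𝓞 Kp)) = algebraMap ℤ (𝓞 K) from
        Subsingleton.elim _ _, hQcomapZ]
  -- valuation at Q
  set v : IsDedekindDomain.HeightOneSpectrum (𝓞 K) := ⟨Q, hQprime, hQbot⟩ with hvdef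
  have hvasIdeal : v.asIdeal = Q := rfl
  have hmemQ : ∀ (x : 𝓞 K) (k : ℕ),
      v.intValuation x ≤ Multiplicative.ofAdd (-(k : ℤ)) ↔ x ∈ Q ^ k := by
    intro x k
    exact v.intValuation_le_pow_iff_mem x k
  have hvone : ∀ x : 𝓞 K, x ∉ Q → v.intValuation x = 1 := by
    intro x hx
    refine le_antisymm (v.intValuation_le_one x) (not_lt.mp fun hlt => ?_)
    rw [intValuation_apply] at hlt
    exact hx (Ideal.dvd_span_singleton.mp ((v.intValuation_lt_one_iff_dvd x).mp hlt))
  have hlamQ : lam ∈ Q := by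
    have hlam4 : lam ^ 4 = -(2 * w) := by rw [hkey]; ring
    have h4 : lam ^ 4 ∈ Q := by
      rw [hlam4]
      exact neg_mem (Ideal.mul_mem_right w Q h2Q)
    exact hQprime.mem_of_pow_mem 4 h4
  have hmQ : algebraMap ℤ (𝓞 K) m ∉ Q := by
    intro hmem
    have hm2 : m ∈ Q.comap (algebraMap ℤ (𝓞 K)) := hmem
    rw [hQcomapZ, Ideal.mem_span_singleton] at hm2
    omega
  have hlam2Q : lam ^ 2 ∈ Q := by rw [pow_two]; exact Ideal.mul_mem_left Q lam hlamQ
  have hlam3Q : lam ^ 3 ∈ Q := by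
    rw [pow_succ]
    exact Ideal.mul_mem_left Q _ hlamQ
  have hwQ : w ∉ Q := by
    intro hmem
    apply hmQ
    rw [show algebraMap ℤ (𝓞 K) m = w - (2 * lam ^ 3 + 3 * lam ^ 2 + 2 * lam) by rw [hwdef]; ring]
    refine Ideal.sub_mem Q hmem (Ideal.add_mem Q (Ideal.add_mem Q ?_ ?_) ?_)
    · exact Ideal.mul_mem_left Q 2 hlam3Q
    · exact Ideal.mul_mem_left Q 3 hlam2Q
    · exact Ideal.mul_mem_left Q 2 hlamQ
  have hvlam : v.intValuation lam ≤ Multiplicative.ofAdd (-(1 : ℤ)) := by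
    have h := (hmemQ lam 1).mpr (by rwa [pow_one])
    simpa using h
  have hv2 : v.intValuation 2 ≤ Multiplicative.ofAdd (-(4 : ℤ)) := by
    have hmul : v.intValuation 2 * v.intValuation w = v.intValuation lam ^ 4 := by
      rw [← map_mul, hkey, Valuation.map_neg, map_pow]
    rw [hvone w hwQ, mul_one] at hmul
    rw [hmul]
    calc v.intValuation lam ^ 4
        ≤ ((ofAdd (-(1 : ℤ)) : Multiplicative ℤ) : WithZero (Multiplicative ℤ)) ^ 4 :=
          pow_le_pow_left' hvlam 4
      _ = ((ofAdd (-(4 : ℤ)) : Multiplicative ℤ) : WithZero (Multiplicative ℤ)) := by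
          rw [aux_coe_pow]; norm_num
  have hv2' : ¬ v.intValuation 2 ≤ Multiplicative.ofAdd (-(5 : ℤ)) := by
    intro hle
    have h25 : (2 : 𝓞 K) ∈ Q ^ 5 := (hmemQ 2 5).mp (by exact_mod_cast hle)
    have hle' : Ideal.span {(2 : 𝓞 K)} ≤ Q ^ 5 := by rwa [Ideal.span_singleton_le_iff_mem]
    have hdvd := Ideal.absNorm_dvd_absNorm_of_le hle'
    rw [habs2K, map_pow] at hdvd
    have hQ0 : Ideal.absNorm Q ≠ 0 := by rw [Ne, Ideal.absNorm_eq_zero_iff]; exact hQbot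
    have hQ1 : Ideal.absNorm Q ≠ 1 := by rw [Ne, Ideal.absNorm_eq_one_iff]; exact hQprime.ne_top
    have h2le : 2 ≤ Ideal.absNorm Q := by omega
    have hle16 := Nat.le_of_dvd (by norm_num) hdvd
    have h32 : 2 ^ 5 ≤ Ideal.absNorm Q ^ 5 := Nat.pow_le_pow_left h2le 5
    omega
  -- image of aOp in 𝓞 K
  set aO : 𝓞 K := algebraMap (𝓞 Kp) (𝓞 K) aOp with haOdef
  have hcoeaO : algebraMap (𝓞 K) K aO = α := rfl
  have haO2 : aO ^ 2 = 2 * ((p ^ n : ℕ) : 𝓞 K) := by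
    apply NumberField.RingOfIntegers.ext
    rw [NumberField.RingOfIntegers.coe_eq_algebraMap, NumberField.RingOfIntegers.coe_eq_algebraMap,
      map_pow, map_mul, map_ofNat, map_natCast, hcoeaO, hα2, hqcast]
  have hqONotQ : ((p ^ n : ℕ) : 𝓞 K) ∉ Q := by
    intro hmem
    have hm : ((p ^ n : ℕ) : ℤ) ∈ Q.comap (algebraMap ℤ (𝓞 K)) := by
      rw [Ideal.mem_comap, map_natCast]; exact hmem
    rw [hQcomapZ, Ideal.mem_span_singleton] at hm
    have h2dvd : (2 : ℕ) ∣ p ^ n := by exact_mod_cast hm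
    obtain ⟨k, hk⟩ := hq
    omega
  have haOQ : aO ∈ Q := by
    refine hQprime.mem_of_pow_mem 2 ?_
    rw [haO2]
    exact Ideal.mul_mem_right _ Q h2Q
  have haOP : aOp ∈ P := by rw [hPdef, Ideal.mem_comap]; exact haOQ
  -- valuation at P
  have h2Op : (2 : 𝓞 Kp) ∈ P := by rw [hPdef, Ideal.mem_comap, map_ofNat]; exact h2Q
  have h2Opne : (2 : 𝓞 Kp) ≠ 0 := by
    intro h
    have h2 := congrArg (algebraMap (𝓞 Kp) Kp) h
    rw [map_ofNat, map_zero] at h2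
    exact two_ne_zero h2
  have hPbot : P ≠ ⊥ := by intro h; rw [h] at h2Op; exact h2Opne (Ideal.mem_bot.mp h2Op)
  set u : IsDedekindDomain.HeightOneSpectrum (𝓞 Kp) := ⟨P, hPprime, hPbot⟩ with hudef
  have huasIdeal : u.asIdeal = P := rfl
  have hmemP : ∀ (x : 𝓞 Kp) (k : ℕ),
      u.intValuation x ≤ Multiplicative.ofAdd (-(k : ℤ)) ↔ x ∈ P ^ k := by
    intro x k
    exact u.intValuation_le_pow_iff_mem x k
  have huone : ∀ x : 𝓞 Kp, x ∉ P → u.intValuation x = 1 := by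
    intro x hx
    refine le_antisymm (u.intValuation_le_one x) (not_lt.mp fun hlt => ?_)
    rw [intValuation_apply] at hlt
    exact hx (Ideal.dvd_span_singleton.mp ((u.intValuation_lt_one_iff_dvd x).mp hlt))
  have haOp2 : aOp ^ 2 = 2 * ((p ^ n : ℕ) : 𝓞 Kp) := by
    apply NumberField.RingOfIntegers.ext
    rw [NumberField.RingOfIntegers.coe_eq_algebraMap, NumberField.RingOfIntegers.coe_eq_algebraMap,
      map_pow, map_mul, map_ofNat, map_natCast]
    exact hαp2
  have hqOpP : ((p ^ n : ℕ) : 𝓞 Kp) ∉ P := by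
    intro hmem
    have hm : ((p ^ n : ℕ) : ℤ) ∈ P.comap (algebraMap ℤ (𝓞 Kp)) := by
      rw [Ideal.mem_comap, map_natCast]; exact hmem
    rw [hPcomapZ, Ideal.mem_span_singleton] at hm
    have h2dvd : (2 : ℕ) ∣ p ^ n := by exact_mod_cast hm
    obtain ⟨k, hk⟩ := hq
    omega
  have huaOp : u.intValuation aOp ≤ Multiplicative.ofAdd (-(1 : ℤ)) := by
    have h := (hmemP aOp 1).mpr (by rwa [pow_one])
    simpa using h
  have hu2 : u.intValuation 2 ≤ Multiplicative.ofAdd (-(2 : ℤ)) := by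
    have hmul : u.intValuation 2 = u.intValuation aOp ^ 2 := by
      rw [← map_pow, haOp2, map_mul, huone _ hqOpP, mul_one]
    rw [hmul]
    calc u.intValuation aOp ^ 2
        ≤ ((ofAdd (-(1 : ℤ)) : Multiplicative ℤ) : WithZero (Multiplicative ℤ)) ^ 2 :=
          pow_le_pow_left' huaOp 2
      _ = ((ofAdd (-(2 : ℤ)) : Multiplicative ℤ) : WithZero (Multiplicative ℤ)) := by
          rw [aux_coe_pow]; norm_num
  -- span{2} = P^2 in 𝓞 Kp
  have habs2Kp : Ideal.absNorm (Ideal.span {(2 : 𝓞 Kp)}) = 4 := by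
    rw [show (2 : 𝓞 Kp) = ((2 : ℕ) : 𝓞 Kp) by norm_cast, aux_absNorm_span_natCast ↥Kp 2, hrankKp]
    norm_num
  have hP2dvd : P ^ 2 ∣ Ideal.span {(2 : 𝓞 Kp)} := by
    rw [Ideal.dvd_iff_le, Ideal.span_singleton_le_iff_mem]
    exact (hmemP 2 2).mp (by exact_mod_cast hu2)
  obtain ⟨Cid, hCid⟩ := hP2dvd
  have habsC : 4 = Ideal.absNorm P ^ 2 * Ideal.absNorm Cid := by
    have hc := congrArg Ideal.absNorm hCid
    rwa [habs2Kp, map_mul, map_pow] at hc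
  have hP0 : Ideal.absNorm P ≠ 0 := by rw [Ne, Ideal.absNorm_eq_zero_iff]; exact hPbot
  have hP1 : Ideal.absNorm P ≠ 1 := by rw [Ne, Ideal.absNorm_eq_one_iff]; exact hPprime.ne_top
  have hsle : 2 ≤ Ideal.absNorm P := by omega
  have hcge : 1 ≤ Ideal.absNorm Cid := by
    rcases Nat.eq_zero_or_pos (Ideal.absNorm Cid) with h0 | h1
    · rw [h0, Nat.mul_zero] at habsC; omega
    · exact h1
  have hs4 : 4 ≤ Ideal.absNorm P ^ 2 := by
    calc 4 = 2 * 2 := by norm_num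
    _ ≤ Ideal.absNorm P * Ideal.absNorm P := Nat.mul_le_mul hsle hsle
    _ = Ideal.absNorm P ^ 2 := (pow_two _).symm
  have hs4' : Ideal.absNorm P ^ 2 ≤ 4 := by
    calc Ideal.absNorm P ^ 2 = Ideal.absNorm P ^ 2 * 1 := by ring
    _ ≤ Ideal.absNorm P ^ 2 * Ideal.absNorm Cid := Nat.mul_le_mul_left _ hcge
    _ = 4 := habsC.symm
  have hc1 : Ideal.absNorm Cid = 1 := by
    have hs : Ideal.absNorm P ^ 2 = 4 := le_antisymm hs4' hs4
    rw [hs] at habsC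
    omega
  have hspan2P : Ideal.span {(2 : 𝓞 Kp)} = P ^ 2 := by
    rw [hCid, Ideal.absNorm_eq_one_iff.mp hc1, Ideal.mul_top]
  -- (A) : map P ≤ Q^2
  have hA : Ideal.map (algebraMap (𝓞 Kp) (𝓞 K)) P ≤ Q ^ 2 := by
    rw [Ideal.map_le_iff_le_comap]
    intro x hx
    rw [Ideal.mem_comap]
    have hx2 : x ^ 2 ∈ Ideal.span {(2 : 𝓞 Kp)} := by
      rw [hspan2P]; exact Ideal.pow_mem_pow hx 2
    obtain ⟨y, hy⟩ := Ideal.mem_span_singleton'.mp hx2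
    have hyK : (algebraMap (𝓞 Kp) (𝓞 K) x) ^ 2 = 2 * algebraMap (𝓞 Kp) (𝓞 K) y := by
      rw [← map_pow, ← hy, map_mul, map_ofNat]
      ring
    have hvx : v.intValuation (algebraMap (𝓞 Kp) (𝓞 K) x) ^ 2
        ≤ ((ofAdd ((2 : ℤ) * (-2)) : Multiplicative ℤ) : WithZero (Multiplicative ℤ)) := by
      rw [← map_pow, hyK, map_mul]
      calc v.intValuation 2 * v.intValuation (algebraMap (𝓞 Kp) (𝓞 K) y)
          ≤ ((ofAdd (-(4 : ℤ)) : Multiplicative ℤ) : WithZero (Multiplicative ℤ)) * 1 :=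
            mul_le_mul' hv2 (v.intValuation_le_one _)
        _ = ((ofAdd ((2 : ℤ) * (-2)) : Multiplicative ℤ) : WithZero (Multiplicative ℤ)) := by
            rw [mul_one]; norm_num
    have hvle := aux_sq_le _ _ hvx
    exact (hmemQ _ 2).mp (by exact_mod_cast hvle)
  -- (B) : ¬ map P ≤ Q^3
  have hB : ¬ Ideal.map (algebraMap (𝓞 Kp) (𝓞 K)) P ≤ Q ^ 3 := by
    intro hle
    have h3 : aO ∈ Q ^ 3 := hle (Ideal.mem_map_of_mem _ haOP)
    have hv3 : v.intValuation aO ≤ Multiplicative.ofAdd (-(3 : ℤ)) := by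
      have h := (hmemQ aO 3).mpr h3
      exact_mod_cast h
    apply hv2'
    have heq : v.intValuation 2 = v.intValuation aO ^ 2 := by
      rw [← map_pow, haO2, map_mul, hvone _ hqONotQ, mul_one]
    rw [heq]
    calc v.intValuation aO ^ 2
        ≤ ((ofAdd (-(3 : ℤ)) : Multiplicative ℤ) : WithZero (Multiplicative ℤ)) ^ 2 :=
          pow_le_pow_left' hv3 2
      _ = ((ofAdd (-(6 : ℤ)) : Multiplicative ℤ) : WithZero (Multiplicative ℤ)) := by
          rw [aux_coe_pow]; norm_num
      _ ≤ ((ofAdd (-(5 : ℤ)) : Multiplicative ℤ) : WithZero (Multiplicative ℤ)) := by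
          rw [WithZero.coe_le_coe, Multiplicative.ofAdd_le]; norm_num
  have he : Ideal.ramificationIdx' P Q = 2 :=
    Ideal.ramificationIdx'_spec hA (by simpa using hB)
  exact ⟨hα2, P, hPprime, hPcomapZ, Q, hQprime, rfl, he⟩
end

section
/- Let n ≥ 1 be odd, let q = 5^n, and let s be the positive integer with s² = 5q. Then the polynomial f = X⁴ + sX³ + 3qX² + sqX + q² is irreducible over ℚ; moreover, letting K = ℚ[X]/(f) with π the image of X and K⁺ = ℚ(π + q/π), some prime ideal of the ring of integers of K⁺ lying over the rational prime 5 is ramified in K (has ramification index 2 in the ring of integers of K). The same holds with s replaced by −s. -/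
open Polynomial NumberField UniqueFactorizationMonoid IntermediateField


lemma core_lemma {L : Type*} [Field L] [Algebra ℚ L] (n : ℕ) (t : ℚ)
    (ht : t ^ 2 = 5 * 5 ^ n) (x : L)
    (hx : x ^ 4 + algebraMap ℚ L t * x ^ 3 + 3 * (5 : L) ^ n * x ^ 2
      + algebraMap ℚ L t * (5 : L) ^ n * x + ((5 : L) ^ n) ^ 2 = 0) :
    x ≠ 0 ∧
      (2 * x + 2 * (5 : L) ^ n * x⁻¹ + algebraMap ℚ L t) ^ 2 = (5 : L) ^ n ∧
      ∃ ζ : L, ζ ^ 4 + ζ ^ 3 + ζ ^ 2 + ζ + 1 = 0 := by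
  have hchar : CharZero L := charZero_of_injective_algebraMap (algebraMap ℚ L).injective
  set T : L := algebraMap ℚ L t with hT
  set q : L := (5 : L) ^ n with hq
  have hq0 : q ≠ 0 := pow_ne_zero _ (by norm_num)
  have ht' : T ^ 2 = 5 * q := by
    rw [hT, hq, ← map_pow, ht, map_mul, map_pow]
    norm_num
  have hx0 : x ≠ 0 := by
    intro h
    rw [h] at hx
    simp only [ne_eq, OfNat.ofNat_ne_zero, not_false_eq_true, zero_pow, mul_zero, add_zero,
      zero_add, mul_zero, zero_add] at hx
    · exact hq0 (pow_eq_zero_iff (by norm_num) |>.mp hx) |>.elim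
  -- numerator U = 2x² + Tx + 2q ; U² = q x²
  have hU : (2 * x ^ 2 + T * x + 2 * q) ^ 2 = q * x ^ 2 := by
    linear_combination 4 * hx + x ^ 2 * ht'
  have hu2 : (2 * x + 2 * q * x⁻¹ + T) ^ 2 = q := by
    have h1 : x * x⁻¹ = 1 := mul_inv_cancel₀ hx0
    have : (2 * x + 2 * q * x⁻¹ + T) * x = 2 * x ^ 2 + T * x + 2 * q := by
      field_simp
      ring
    have hxx : (2 * x + 2 * q * x⁻¹ + T) ^ 2 * x ^ 2 = q * x ^ 2 := by
      rw [← mul_pow, this, hU]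
    exact mul_right_cancel₀ (pow_ne_zero 2 hx0) hxx
  refine ⟨hx0, hu2, ?_⟩
  set u : L := 2 * x + 2 * q * x⁻¹ + T with hu
  have hu0 : u ≠ 0 := by
    intro h
    rw [h] at hu2
    simp at hu2
    exact hq0 hu2.symm
  have hP8 : x ^ 8 + q * x ^ 6 + q ^ 2 * x ^ 4 + q ^ 3 * x ^ 2 + q ^ 4 = 0 := by
    linear_combination (x ^ 4 - T * x ^ 3 + 3 * q * x ^ 2 - T * q * x + q ^ 2) * hx
      + x ^ 2 * (x ^ 2 + q) ^ 2 * ht'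
  have h8 : x ^ 8 + x ^ 6 * u ^ 2 + x ^ 4 * u ^ 4 + x ^ 2 * u ^ 6 + u ^ 8 = 0 := by
    linear_combination hP8 + (x ^ 6 + x ^ 4 * (u ^ 2 + q) + x ^ 2 * (u ^ 4 + u ^ 2 * q + q ^ 2)
      + (u ^ 6 + u ^ 4 * q + u ^ 2 * q ^ 2 + q ^ 3)) * hu2
  set z : L := x * u⁻¹ with hz
  have hzu : z * u = x := by
    rw [hz]
    field_simp
  have hprod : (z ^ 4 + z ^ 3 + z ^ 2 + z + 1) * (z ^ 4 - z ^ 3 + z ^ 2 - z + 1) = 0 := by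
    have h0 : (z ^ 4 + z ^ 3 + z ^ 2 + z + 1) * (z ^ 4 - z ^ 3 + z ^ 2 - z + 1) * u ^ 8 = 0 := by
      calc (z ^ 4 + z ^ 3 + z ^ 2 + z + 1) * (z ^ 4 - z ^ 3 + z ^ 2 - z + 1) * u ^ 8
          = (z * u) ^ 8 + (z * u) ^ 6 * u ^ 2 + (z * u) ^ 4 * u ^ 4 + (z * u) ^ 2 * u ^ 6
            + u ^ 8 := by ring
        _ = 0 := by rw [hzu]; exact h8
    rcases mul_eq_zero.mp h0 with h | h
    · exact h
    · exact absurd h (pow_ne_zero 8 hu0)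
  rcases mul_eq_zero.mp hprod with h | h
  · exact ⟨z, h⟩
  · exact ⟨-z, by linear_combination h⟩

-- any field with a root of Φ₅-type equation has a deg-4 subfield
open IntermediateField in
lemma cyclo_finrank {L : Type*} [Field L] [Algebra ℚ L] [FiniteDimensional ℚ L]
    (ζ : L) (hζ : ζ ^ 4 + ζ ^ 3 + ζ ^ 2 + ζ + 1 = 0) : 4 ≤ Module.finrank ℚ L := by
  haveI : Fact (Nat.Prime 5) := ⟨by norm_num⟩
  have haev : aeval ζ (cyclotomic 5 ℚ) = 0 := by
    rw [cyclotomic_prime ℚ 5]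
    simp [Finset.sum_range_succ]
    linear_combination hζ
  have hint : IsIntegral ℚ ζ := ⟨cyclotomic 5 ℚ, cyclotomic.monic 5 ℚ, haev⟩
  have hmin : minpoly ℚ ζ = cyclotomic 5 ℚ :=
    (minpoly.eq_of_irreducible_of_monic (cyclotomic.irreducible_rat (by norm_num)) haev
      (cyclotomic.monic 5 ℚ)).symm
  have h4 : Module.finrank ℚ ℚ⟮ζ⟯ = 4 := by
    rw [IntermediateField.adjoin.finrank hint, hmin, natDegree_cyclotomic,
      Nat.totient_prime (by norm_num)]
  calc 4 = Module.finrank ℚ ℚ⟮ζ⟯ := h4.symm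
    _ ≤ Module.finrank ℚ L := Submodule.finrank_le (Subalgebra.toSubmodule ℚ⟮ζ⟯.toSubalgebra)

lemma irr_lemma (n : ℕ) (t : ℚ) (ht : t ^ 2 = 5 * 5 ^ n) :
    Irreducible (X ^ 4 + C t * X ^ 3 + C (3 * (5 : ℚ) ^ n) * X ^ 2
      + C (t * (5 : ℚ) ^ n) * X + C (((5 : ℚ) ^ n) ^ 2) : ℚ[X]) := by
  set f : ℚ[X] := X ^ 4 + C t * X ^ 3 + C (3 * (5 : ℚ) ^ n) * X ^ 2
      + C (t * (5 : ℚ) ^ n) * X + C (((5 : ℚ) ^ n) ^ 2) with hf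
  have hfm : f.Monic := by
    rw [hf]
    monicity!
  have hf0 : f ≠ 0 := hfm.ne_zero
  have hdeg : f.natDegree = 4 := by
    rw [hf]
    compute_degree!
  have key : ∀ g : ℚ[X], Irreducible g → g ∣ f → 4 ≤ g.natDegree := by
    intro g hgirr hgdvd
    haveI : Fact (Irreducible g) := ⟨hgirr⟩
    have hg0 : g ≠ 0 := hgirr.ne_zero
    set α := AdjoinRoot.root g with hα
    have haev : aeval α f = 0 := by
      obtain ⟨h, hfh⟩ := hgdvd
      rw [hfh, map_mul, hα]; exact mul_eq_zero_of_left (AdjoinRoot.aeval_eq g ▸ AdjoinRoot.mk_self) _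
    have hx : α ^ 4 + algebraMap ℚ (AdjoinRoot g) t * α ^ 3
        + 3 * (5 : AdjoinRoot g) ^ n * α ^ 2
        + algebraMap ℚ (AdjoinRoot g) t * (5 : AdjoinRoot g) ^ n * α
        + ((5 : AdjoinRoot g) ^ n) ^ 2 = 0 := by
      have := haev
      rw [hf] at this
      simpa [map_add, map_mul, map_pow, aeval_C, map_ofNat] using this
    obtain ⟨-, -, ζ, hζ⟩ := core_lemma n t ht α hx
    haveI : FiniteDimensional ℚ (AdjoinRoot g) := (AdjoinRoot.powerBasis hg0).finite
    have := cyclo_finrank ζ hζ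
    rwa [(AdjoinRoot.powerBasis hg0).finrank, AdjoinRoot.powerBasis_dim] at this
  constructor
  · intro hu
    have := natDegree_eq_zero_of_isUnit hu
    omega
  · intro a b hab
    by_contra hc
    push_neg at hc
    obtain ⟨ha, hb⟩ := hc
    have ha0 : a ≠ 0 := fun h => hf0 (by rw [hab, h, zero_mul])
    have hb0 : b ≠ 0 := fun h => hf0 (by rw [hab, h, mul_zero])
    have hsum : a.natDegree + b.natDegree = 4 := by
      rw [← natDegree_mul ha0 hb0, ← hab, hdeg]
    have ha1 : 1 ≤ a.natDegree := by
      by_contra hcon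
      push_neg at hcon
      have h0 : a.natDegree = 0 := by omega
      refine ha ?_
      rw [Polynomial.eq_C_of_natDegree_eq_zero h0]
      refine isUnit_C.mpr (IsUnit.mk0 _ ?_)
      intro hc
      exact ha0 (by rw [Polynomial.eq_C_of_natDegree_eq_zero h0, hc, map_zero])
    obtain ⟨g, hgirr, hgdvd⟩ := WfDvdMonoid.exists_irreducible_factor hb hb0
    have h1 : 4 ≤ g.natDegree := key g hgirr (hgdvd.trans ⟨a, by rw [hab]; ring⟩)
    have h2 : g.natDegree ≤ b.natDegree := natDegree_le_of_dvd hgdvd hb0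
    omega


lemma le_ramificationIdx_of_le_pow {R S : Type*} [CommRing R] [CommRing S] [IsDedekindDomain S]
    [Algebra R S] {p : Ideal R} {P : Ideal S} (hp0 : Ideal.map (algebraMap R S) p ≠ ⊥) (hP : P.IsPrime)
    (hP0 : P ≠ ⊥) {k : ℕ} (h : Ideal.map (algebraMap R S) p ≤ P ^ k) : k ≤ Ideal.ramificationIdx' p P := by
  classical
  rw [Ideal.IsDedekindDomain.ramificationIdx'_eq_normalizedFactors_count hp0 hP hP0]
  have hPirr := (Ideal.prime_of_isPrime hP0 hP).irreducible
  have hd := (dvd_iff_normalizedFactors_le_normalizedFactors (pow_ne_zero k hP0) hp0).mp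
    (Ideal.dvd_iff_le.mpr h)
  rw [normalizedFactors_pow, normalizedFactors_irreducible hPirr, normalize_eq,
    Multiset.nsmul_singleton] at hd
  exact Multiset.le_count_iff_replicate_le.mpr hd

lemma ramificationIdx_le_finrank
    (R S K L : Type*) [CommRing R] [CommRing S] [IsDedekindDomain R] [IsDedekindDomain S]
    [Field K] [Field L] [Algebra R S] [Algebra R K] [IsFractionRing R K] [Algebra S L]
    [IsFractionRing S L] [Algebra K L] [Algebra R L] [IsScalarTower R S L] [IsScalarTower R K L]
    [Module.Finite R S] (p : Ideal R) (P : Ideal S) [p.IsMaximal] (hp0 : p ≠ ⊥)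
    (hP : P.IsPrime) (hP0 : P ≠ ⊥) (hle : Ideal.map (algebraMap R S) p ≤ P)
    (hmap0 : Ideal.map (algebraMap R S) p ≠ ⊥)
    (hover : Ideal.comap (algebraMap R S) P = p) :
    Ideal.ramificationIdx' p P ≤ Module.finrank K L := by
  classical
  have hmem : P ∈ IsDedekindDomain.primesOverFinset p S := by
    unfold IsDedekindDomain.primesOverFinset
    rw [Multiset.mem_toFinset, factors_eq_normalizedFactors]
    obtain ⟨P', hmem, heq⟩ := exists_mem_normalizedFactors_of_dvd hmap0
      (Ideal.prime_of_isPrime hP0 hP).irreducible (Ideal.dvd_iff_le.mpr hle)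
    rwa [← associated_iff_eq.mp heq] at hmem
  have hsum := Ideal.sum_ramification_inertia S K L hp0
  haveI : P.LiesOver p := ⟨hover.symm⟩
  have hfpos : 0 < Ideal.inertiaDeg' p P := Ideal.inertiaDeg'_pos p P
  calc Ideal.ramificationIdx' p P
      ≤ Ideal.ramificationIdx' p P * Ideal.inertiaDeg' p P :=
        Nat.le_mul_of_pos_right _ hfpos
    _ ≤ ∑ P' ∈ IsDedekindDomain.primesOverFinset p S,
        Ideal.ramificationIdx' p P' * Ideal.inertiaDeg' p P' :=
        Finset.single_le_sum (f := fun P' => Ideal.ramificationIdx' p P' * Ideal.inertiaDeg' p P') (fun _ _ => Nat.zero_le _) hmem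
    _ = Module.finrank K L := hsum

set_option maxHeartbeats 2000000 in
set_option synthInstance.maxHeartbeats 1000000 in
theorem A_sqrt5q_ramified_over_five (n : ℕ) (hn : 1 ≤ n) (hodd : Odd n)
    (s : ℤ) (hs : 0 < s) (hs2 : s ^ 2 = 5 * 5 ^ n) :
    ∀ t : ℤ, (t = s ∨ t = -s) →
      ∃ hirr : Irreducible (X ^ 4 + C (t : ℚ) * X ^ 3 + C (3 * (5 : ℚ) ^ n) * X ^ 2
          + C ((t : ℚ) * (5 : ℚ) ^ n) * X + C (((5 : ℚ) ^ n) ^ 2) : ℚ[X]),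
        letI f : ℚ[X] := X ^ 4 + C (t : ℚ) * X ^ 3 + C (3 * (5 : ℚ) ^ n) * X ^ 2
          + C ((t : ℚ) * (5 : ℚ) ^ n) * X + C (((5 : ℚ) ^ n) ^ 2)
        haveI : Fact (Irreducible f) := ⟨hirr⟩
        letI K := AdjoinRoot f
        letI π := AdjoinRoot.root f
        letI Kplus := IntermediateField.adjoin ℚ {π + ((5 : K) ^ n) * π⁻¹}
        ∃ P : Ideal (𝓞 Kplus), P.IsPrime ∧
          P.comap (algebraMap ℤ (𝓞 Kplus)) = Ideal.span {(5 : ℤ)} ∧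
          ∃ Q : Ideal (𝓞 K), Q.IsPrime ∧
            Q.comap (algebraMap (𝓞 Kplus) (𝓞 K)) = P ∧
            Ideal.ramificationIdx' P Q = 2 := by
  intro t htmem
  have htz : t ^ 2 = 5 * 5 ^ n := by
    rcases htmem with rfl | rfl
    · exact hs2
    · calc (-s) ^ 2 = s ^ 2 := by ring
        _ = 5 * 5 ^ n := hs2
  have ht2 : (t : ℚ) ^ 2 = 5 * 5 ^ n := by exact_mod_cast congrArg (fun z : ℤ => (z : ℚ)) htz
  have hirr := irr_lemma n (t : ℚ) ht2
  refine ⟨hirr, ?_⟩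
  set F : ℚ[X] := X ^ 4 + C (t : ℚ) * X ^ 3 + C (3 * (5 : ℚ) ^ n) * X ^ 2
      + C ((t : ℚ) * (5 : ℚ) ^ n) * X + C (((5 : ℚ) ^ n) ^ 2) with hF
  haveI : Fact (Irreducible F) := ⟨hirr⟩
  set K : Type := AdjoinRoot F with hK
  set π : K := AdjoinRoot.root F with hπdef
  have hF0 : F ≠ 0 := hirr.ne_zero
  haveI hKchar : CharZero K := charZero_of_injective_algebraMap (algebraMap ℚ K).injective
  haveI hKfin : FiniteDimensional ℚ K := (AdjoinRoot.powerBasis hF0).finite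
  haveI hKnf : NumberField K :=
    { to_charZero := hKchar, to_finiteDimensional := hKfin }
  have hfeval : aeval π F = 0 := by
    rw [hπdef]; exact AdjoinRoot.aeval_eq F ▸ AdjoinRoot.mk_self
  have hx : π ^ 4 + algebraMap ℚ K (t : ℚ) * π ^ 3 + 3 * (5 : K) ^ n * π ^ 2
      + algebraMap ℚ K (t : ℚ) * (5 : K) ^ n * π + ((5 : K) ^ n) ^ 2 = 0 := by
    have h : aeval π (X ^ 4 + C (t : ℚ) * X ^ 3 + C (3 * (5 : ℚ) ^ n) * X ^ 2
      + C ((t : ℚ) * (5 : ℚ) ^ n) * X + C (((5 : ℚ) ^ n) ^ 2)) = 0 := hfeval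
    simpa [map_add, map_mul, map_pow, aeval_C, map_ofNat] using h
  obtain ⟨hπ0, hu2, ζ, hζ⟩ := core_lemma n (t : ℚ) ht2 π hx
  set T : K := algebraMap ℚ K (t : ℚ) with hT
  set β : K := π + (5 : K) ^ n * π⁻¹ with hβ
  set Kp : IntermediateField ℚ K := IntermediateField.adjoin ℚ {β} with hKp
  haveI hKpchar : CharZero Kp := charZero_of_injective_algebraMap (algebraMap ℚ Kp).injective
  haveI hKpnf : NumberField Kp :=
    { to_charZero := hKpchar, to_finiteDimensional := inferInstance }
  have hT2 : T ^ 2 = 5 * (5 : K) ^ n := by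
    rw [hT, ← map_pow, ht2, map_mul, map_pow]
    norm_num
  have hu2' : (2 * β + T) ^ 2 = (5 : K) ^ n := by
    have heq : 2 * β + T = 2 * π + 2 * (5 : K) ^ n * π⁻¹ + T := by rw [hβ]; ring
    rw [heq]
    exact hu2
  have hb : β ^ 2 + T * β + (5 : K) ^ n = 0 := by
    linear_combination ((1 : K) / 4) * hu2' - ((1 : K) / 4) * hT2
  -- finrank bounds
  have hfinKp : Module.finrank ℚ Kp ≤ 2 := by
    have hint : IsIntegral ℚ β := IsIntegral.of_finite ℚ β
    rw [hKp, IntermediateField.adjoin.finrank hint]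
    have haevβ : aeval β (X ^ 2 + C (t : ℚ) * X + C ((5 : ℚ) ^ n)) = 0 := by
      simpa [map_add, map_mul, map_pow, aeval_C, map_ofNat, hT] using hb
    have hdvd : minpoly ℚ β ∣ (X ^ 2 + C (t : ℚ) * X + C ((5 : ℚ) ^ n)) :=
      minpoly.dvd ℚ β haevβ
    have hne : (X ^ 2 + C (t : ℚ) * X + C ((5 : ℚ) ^ n)) ≠ 0 := by
      apply Polynomial.Monic.ne_zero
      monicity!
    calc (minpoly ℚ β).natDegree ≤ (X ^ 2 + C (t : ℚ) * X + C ((5 : ℚ) ^ n)).natDegree :=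
          natDegree_le_of_dvd hdvd hne
      _ ≤ 2 := by compute_degree!
  have hfinK : Module.finrank ℚ K = 4 := by
    rw [(AdjoinRoot.powerBasis hF0).finrank, AdjoinRoot.powerBasis_dim]
    rw [hF]
    compute_degree!
  -- ζ is integral; identities in the ring of integers of K
  have hζint : ζ ∈ integralClosure ℤ K := by
    refine ⟨X ^ 4 + X ^ 3 + X ^ 2 + X + 1, by monicity!, ?_⟩
    simp only [eval₂_add, eval₂_pow, eval₂_X, eval₂_one]
    exact hζ
  set ζO : 𝓞 K := ⟨ζ, hζint⟩ with hζOdef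
  set w5O : 𝓞 K := (1 + ζO) * (1 + ζO + ζO ^ 2) * (1 + ζO + ζO ^ 2 + ζO ^ 3) with hw5
  set vO : 𝓞 K := (1 + ζO ^ 2 + ζO ^ 4) * (1 + ζO ^ 3) * (1 + ζO ^ 2 + ζO ^ 3 + ζO ^ 4) with hvO
  have hcoeζ : (algebraMap (𝓞 K) K) ζO = ζ := rfl
  have h5eq : (1 - ζO) ^ 4 * w5O = 5 := by
    apply RingOfIntegers.coe_injective
    simp only [hw5, map_mul, map_pow, map_sub, map_add, map_one, map_ofNat, hcoeζ]
    linear_combination (ζ ^ 6 - 2 * ζ ^ 5 + ζ ^ 3 + 3 * ζ - 4) * hζ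
  have hunit : w5O * vO = 1 := by
    apply RingOfIntegers.coe_injective
    simp only [hw5, hvO, map_mul, map_pow, map_add, map_one, hcoeζ]
    linear_combination (ζ ^ 13 + 3 * ζ ^ 12 + 6 * ζ ^ 11 + 9 * ζ ^ 10 + 12 * ζ ^ 9 + 15 * ζ ^ 8
      + 16 * ζ ^ 7 + 16 * ζ ^ 6 + 13 * ζ ^ 5 + 10 * ζ ^ 4 + 7 * ζ ^ 3 + 4 * ζ ^ 2 + 3 * ζ) * hζ
  -- the prime 5 in ℤ
  have hp5 : Prime (5 : ℤ) := by norm_num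
  haveI h5max : (Ideal.span {(5 : ℤ)}).IsMaximal :=
    PrincipalIdealRing.isMaximal_of_irreducible hp5.irreducible
  have hsp5ne : Ideal.span {(5 : ℤ)} ≠ ⊥ := by
    simp [Ideal.span_singleton_eq_bot]
  -- choose Q over 5 in 𝓞 K
  have hinjZK : Function.Injective (algebraMap ℤ (𝓞 K)) :=
    RingHom.injective_int _
  obtain ⟨Q, hQmax, hQcomap⟩ := Ideal.exists_ideal_over_maximal_of_isIntegral
    (S := 𝓞 K) (Ideal.span {(5 : ℤ)})
    (by rw [(RingHom.injective_iff_ker_eq_bot _).mp hinjZK]; exact bot_le)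
  haveI hQprime : Q.IsPrime := hQmax.isPrime
  have h5Q : (5 : 𝓞 K) ∈ Q := by
    have h1 : (5 : ℤ) ∈ Ideal.comap (algebraMap ℤ (𝓞 K)) Q := by
      rw [hQcomap]; exact Ideal.subset_span rfl
    simpa only [Ideal.mem_comap, map_ofNat] using h1
  have h5ne : (5 : 𝓞 K) ≠ 0 := by
    intro h
    have h2 := congrArg (algebraMap (𝓞 K) K) h
    rw [map_ofNat, map_zero] at h2
    norm_num at h2
  have hlamQ : 1 - ζO ∈ Q := by
    have h4 : (1 - ζO) ^ 4 * w5O ∈ Q := by rw [h5eq]; exact h5Q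
    rcases hQprime.mem_or_mem h4 with h | h
    · exact hQprime.mem_of_pow_mem _ h
    · exfalso
      have h1 : (1 : 𝓞 K) ∈ Q := by rw [← hunit]; exact Ideal.mul_mem_right _ _ h
      exact hQprime.ne_top (Ideal.eq_top_of_isUnit_mem _ h1 isUnit_one)
  have hmapQ5 : Ideal.map (algebraMap ℤ (𝓞 K)) (Ideal.span {(5 : ℤ)})
      = Ideal.span {(5 : 𝓞 K)} := by
    rw [Ideal.map_span, Set.image_singleton, map_ofNat]
  have hQne : Q ≠ ⊥ := by
    intro h
    rw [h] at h5Q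
    exact h5ne (Ideal.mem_bot.mp h5Q)
  have hmapKne : Ideal.map (algebraMap ℤ (𝓞 K)) (Ideal.span {(5 : ℤ)}) ≠ ⊥ := by
    rw [hmapQ5]
    simp [Ideal.span_singleton_eq_bot, h5ne]
  have hle4 : Ideal.map (algebraMap ℤ (𝓞 K)) (Ideal.span {(5 : ℤ)}) ≤ Q ^ 4 := by
    rw [hmapQ5, Ideal.span_singleton_le_iff_mem]
    have hpow : (1 - ζO) ^ 4 ∈ Q ^ 4 := Ideal.pow_mem_pow hlamQ 4
    have hmm : (1 - ζO) ^ 4 * w5O ∈ Q ^ 4 := Ideal.mul_mem_right _ _ hpow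
    rwa [h5eq] at hmm
  have hleQ : Ideal.map (algebraMap ℤ (𝓞 K)) (Ideal.span {(5 : ℤ)}) ≤ Q := by
    rw [hmapQ5, Ideal.span_singleton_le_iff_mem]
    exact h5Q
  have he4 : Ideal.ramificationIdx' (Ideal.span {(5 : ℤ)}) Q = 4 := by
    refine le_antisymm ?_ (le_ramificationIdx_of_le_pow hmapKne hQprime hQne hle4)
    have h := ramificationIdx_le_finrank ℤ (𝓞 K) ℚ K (Ideal.span {(5 : ℤ)}) Q
      hsp5ne hQprime hQne hleQ hmapKne hQcomap
    rwa [hfinK] at h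
  -- the element γ = (2β+T)/5^m of K⁺ with γ² = 5
  obtain ⟨m, hm⟩ := hodd
  have h5mne : ((5 : K) ^ m) ≠ 0 := pow_ne_zero _ (by norm_num)
  set γK : K := (β + β + T) * ((5 : K) ^ m)⁻¹ with hγK
  have hγK2 : γK ^ 2 = 5 := by
    have h2 : ((5 : K) ^ m) ^ 2 * 5 = (5 : K) ^ n := by
      rw [← pow_mul, hm]
      ring
    rw [hγK, mul_pow, inv_pow, mul_inv_eq_iff_eq_mul₀ (pow_ne_zero 2 h5mne)]
    linear_combination hu2' - h2
  have hβmem : β ∈ Kp := by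
    rw [hKp]
    exact IntermediateField.mem_adjoin_simple_self ℚ β
  have hγmem : γK ∈ Kp := by
    have h5mmem : (5 : K) ^ m ∈ Kp := by
      have := Kp.algebraMap_mem ((5 : ℚ) ^ m)
      rwa [map_pow, map_ofNat] at this
    refine Kp.mul_mem (Kp.add_mem (Kp.add_mem hβmem hβmem) (Kp.algebraMap_mem _))
      (Kp.inv_mem h5mmem)
  set γ : Kp := ⟨γK, hγmem⟩ with hγ
  have hγ2 : γ ^ 2 = 5 := by
    apply Subtype.ext
    push_cast
    exact hγK2
  have hγint : γ ∈ integralClosure ℤ Kp := by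
    refine ⟨X ^ 2 - 5, by monicity!, ?_⟩
    simp only [eval₂_sub, eval₂_pow, eval₂_X, eval₂_ofNat]
    rw [hγ2]
    ring
  set γO : 𝓞 Kp := ⟨γ, hγint⟩ with hγO
  have hγO2 : γO ^ 2 = 5 := by
    apply RingOfIntegers.coe_injective
    rw [map_pow, map_ofNat]
    exact hγ2
  -- the prime P below Q
  set gOK := algebraMap (𝓞 Kp) (𝓞 K) with hgOK
  set P : Ideal (𝓞 Kp) := Q.comap gOK with hPdef
  haveI hPprime : P.IsPrime := Ideal.IsPrime.comap _
  have hγOQ : gOK γO ∈ Q := by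
    apply hQprime.mem_of_pow_mem 2
    rw [← map_pow, hγO2, map_ofNat]
    exact h5Q
  have hγOP : γO ∈ P := by
    rw [hPdef]
    exact hγOQ
  have h5P : (5 : 𝓞 Kp) ∈ P := by
    rw [← hγO2, sq]
    exact Ideal.mul_mem_left _ _ hγOP
  have h5Kpne : (5 : 𝓞 Kp) ≠ 0 := by
    intro h
    have h2 := congrArg (algebraMap (𝓞 Kp) Kp) h
    rw [map_ofNat, map_zero] at h2
    norm_num at h2
  have hPne : P ≠ ⊥ := by
    intro h
    rw [h] at h5P
    exact h5Kpne (Ideal.mem_bot.mp h5P)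
  have hcomapP : Ideal.comap (algebraMap ℤ (𝓞 Kp)) P = Ideal.span {(5 : ℤ)} := by
    rw [hPdef, Ideal.comap_comap]
    have hcomp : gOK.comp (algebraMap ℤ (𝓞 Kp)) = algebraMap ℤ (𝓞 K) :=
      RingHom.ext_int _ _
    rw [hcomp, hQcomap]
  have hmapP5 : Ideal.map (algebraMap ℤ (𝓞 Kp)) (Ideal.span {(5 : ℤ)})
      = Ideal.span {(5 : 𝓞 Kp)} := by
    rw [Ideal.map_span, Set.image_singleton, map_ofNat]
  have hmapKpne : Ideal.map (algebraMap ℤ (𝓞 Kp)) (Ideal.span {(5 : ℤ)}) ≠ ⊥ := by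
    rw [hmapP5]
    simp [Ideal.span_singleton_eq_bot, h5Kpne]
  have hleP : Ideal.map (algebraMap ℤ (𝓞 Kp)) (Ideal.span {(5 : ℤ)}) ≤ P := by
    rw [hmapP5, Ideal.span_singleton_le_iff_mem]
    exact h5P
  have hleP2 : Ideal.map (algebraMap ℤ (𝓞 Kp)) (Ideal.span {(5 : ℤ)}) ≤ P ^ 2 := by
    rw [hmapP5, Ideal.span_singleton_le_iff_mem, ← hγO2]
    exact Ideal.pow_mem_pow hγOP 2
  have he2 : Ideal.ramificationIdx' (Ideal.span {(5 : ℤ)}) P = 2 := by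
    refine le_antisymm ?_ (le_ramificationIdx_of_le_pow hmapKpne hPprime hPne hleP2)
    have h := ramificationIdx_le_finrank ℤ (𝓞 Kp) ℚ Kp (Ideal.span {(5 : ℤ)}) P
      hsp5ne hPprime hPne hleP hmapKpne hcomapP
    exact le_trans h hfinKp
  -- tower multiplicativity
  have hmapgP : Ideal.map gOK P ≤ Q := Ideal.map_comap_le
  have hmapgPne : Ideal.map gOK P ≠ ⊥ := by
    intro h
    have hmem5 : gOK (5 : 𝓞 Kp) ∈ Ideal.map gOK P := Ideal.mem_map_of_mem _ h5P
    rw [h] at hmem5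
    rw [map_ofNat] at hmem5
    exact h5ne (Ideal.mem_bot.mp hmem5)
  have htower := Ideal.ramificationIdx'_algebra_tower (R := ℤ) (S := 𝓞 Kp) (T := 𝓞 K)
      (p := Ideal.span {(5 : ℤ)}) (P := P) (Q := Q) hmapgPne hmapKne hmapgP
  rw [he4] at htower
  rw [he2] at htower
  exact ⟨P, hPprime, hcomapP, Q, hQprime, rfl, by omega⟩
end
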